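/- arXiv:2306.14428 — 11 statements merged into one kernel-verified Lean document; each statement's English description precedes it below -/
import Mathlib

section
/- Every matrix in the 6-dimensional space E_III has rank at most 4, and some matrix in E_III has rank exactly 4; that is, E_III is a space of bounded rank 4. -/
set_option maxHeartbeats 1600000
/-- Case (III) of the main theorem: for `a = (a1,…,a6) ∈ ℂ^6`, the matrix `M_III(a)`. -/
noncomputable def MIII (a : Fin 6 → ℂ) : Matrix (Fin 6) (Fin 6) ℂ :=
  !![a 0, 0, 0, 0, -a 2, -a 4;
     0, a 0, 0, 0, -a 3, -a 5;
     0, 0, a 0, 0, a 1, 0;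
     0, 0, 0, a 0, 0, a 1;
     a 1, 0, a 2, a 4, 0, 0;
     0, a 1, a 3, a 5, 0, 0]

lemma cons5 {α : Type*} (x : α) (u : Fin 5 → α) : Matrix.vecCons x u 5 = u 4 := rfl

lemma aux_le {M : Matrix (Fin 6) (Fin 6) ℂ} (A : Matrix (Fin 6) (Fin 4) ℂ)
    (B : Matrix (Fin 4) (Fin 6) ℂ) (h : M = A * B) : M.rank ≤ 4 := by
  subst h
  exact le_trans (Matrix.rank_mul_le_left A B) (Matrix.rank_le_width A)

lemma rank_le_all (a : Fin 6 → ℂ) : (MIII a).rank ≤ 4 := by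
  by_cases h0 : a 0 ≠ 0
  · apply aux_le
      !![a 0, 0, 0, 0;
         0, a 0, 0, 0;
         0, 0, a 0, 0;
         0, 0, 0, a 0;
         a 1, 0, a 2, a 4;
         0, a 1, a 3, a 5]
      !![1, 0, 0, 0, -a 2/a 0, -a 4/a 0;
         0, 1, 0, 0, -a 3/a 0, -a 5/a 0;
         0, 0, 1, 0, a 1/a 0, 0;
         0, 0, 0, 1, 0, a 1/a 0]
    ext i j
    fin_cases i <;> fin_cases j <;>
      · simp [MIII, Matrix.mul_apply, Fin.sum_univ_four, cons5, Matrix.vecHead,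
          Matrix.vecTail]
        try field_simp
        try ring
  push_neg at h0
  by_cases h1 : a 1 ≠ 0
  · apply aux_le
      !![0, 0, -a 2, -a 4;
         0, 0, -a 3, -a 5;
         0, 0, a 1, 0;
         0, 0, 0, a 1;
         a 1, 0, 0, 0;
         0, a 1, 0, 0]
      !![1, 0, a 2/a 1, a 4/a 1, 0, 0;
         0, 1, a 3/a 1, a 5/a 1, 0, 0;
         0, 0, 0, 0, 1, 0;
         0, 0, 0, 0, 0, 1]
    ext i j
    fin_cases i <;> fin_cases j <;>
      · simp [MIII, h0, Matrix.mul_apply, Fin.sum_univ_four, cons5, Matrix.vecHead,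
          Matrix.vecTail]
        try field_simp
        try ring
  push_neg at h1
  apply aux_le
    !![0, 0, -a 2, -a 4;
       0, 0, -a 3, -a 5;
       0, 0, 0, 0;
       0, 0, 0, 0;
       a 2, a 4, 0, 0;
       a 3, a 5, 0, 0]
    !![0, 0, 1, 0, 0, 0;
       0, 0, 0, 1, 0, 0;
       0, 0, 0, 0, 1, 0;
       0, 0, 0, 0, 0, 1]
  ext i j
  fin_cases i <;> fin_cases j <;>
    simp [MIII, h0, h1, Matrix.mul_apply, Fin.sum_univ_four, cons5, Matrix.vecHead,
      Matrix.vecTail]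

lemma rank_eq_four : (MIII ![1,0,0,0,0,0]).rank = 4 := by
  have hd : MIII ![1,0,0,0,0,0] = Matrix.diagonal ![1,1,1,1,0,0] := by
    ext i j
    fin_cases i <;> fin_cases j <;>
      simp [MIII, Matrix.diagonal, cons5, Matrix.vecHead, Matrix.vecTail]
  rw [hd, Matrix.rank_diagonal]
  rw [Fintype.card_congr (Equiv.subtypeEquivRight (q := fun i : Fin 6 => i.val < 4)
    (by intro i; fin_cases i <;> simp [cons5, Matrix.vecHead, Matrix.vecTail]))]
  decide

/-- Every matrix in the space `E_III = {M_III(a) : a ∈ ℂ^6}` has rank at most `4`,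
and some matrix in `E_III` has rank exactly `4`: `E_III` is of bounded rank `4`. -/
theorem stmt1 :
    (∀ a : Fin 6 → ℂ, (MIII a).rank ≤ 4) ∧ (∃ a : Fin 6 → ℂ, (MIII a).rank = 4) := by
  exact ⟨rank_le_all, ![1,0,0,0,0,0], rank_eq_four⟩
end

section
/- The space E_III is primitive: for every 5-dimensional subspace H ⊆ ℂ^6 there exists a ∈ ℂ^6 such that the restriction of the linear map M_III(a) : ℂ^6 → ℂ^6 to H has rank at least 4, and for every 5-dimensional subspace H' ⊆ ℂ^6 there exists a ∈ ℂ^6 such that the restriction of the transpose map M_III(a)ᵀ : ℂ^6 → ℂ^6 to H' has rank at least 4. -/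
/-!
When `a₁ ≠ 0`, the first four rows of `M_III(a)`, and of its transpose, are `a₁ • I₄`
beside a `4 × 2` block, so the kernel has dimension at most `2`. If a hyperplane `H`
does not contain that kernel, then `H ∩ ker` has dimension at most `1`, and the image
of `H` has dimension at least `5 - 1 = 4`. No hyperplane contains all these kernels:
the kernel vectors `(a₃, a₄, -a₂, 0, a₁, 0)` and `(a₅, a₆, 0, -a₂, 0, a₁)` of `M_III(a)`
(and their analogues for the transpose) already span `ℂ⁶` as `a` ranges over `a₁ ≠ 0`.
-/

open Matrix

open Module LinearMap

section
variable {K V W : Type*} [DivisionRing K] [AddCommGroup V] [Module K V]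
  [AddCommGroup W] [Module K W]

theorem Submodule.finrank_lt_finrank_map_add_finrank_ker [FiniteDimensional K V]
    (f : V →ₗ[K] W) {H : Submodule K V} (h : ¬ ker f ≤ H) :
    finrank K H < finrank K (H.map f) + finrank K (ker f) := by
  have hlt : H ⊓ ker f < ker f := inf_le_right.lt_of_ne fun heq => h (heq ▸ inf_le_left)
  have hrank := finrank_range_add_finrank_ker (f.domRestrict H)
  rw [range_domRestrict, ker_domRestrict, ← Submodule.finrank_map_subtype_eq,
    Submodule.map_comap_subtype] at hrank
  have := Submodule.finrank_lt_finrank_of_lt hlt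
  omega

theorem LinearMap.finrank_ker_le_of_disjoint_ker {U : Type*} [AddCommGroup U] [Module K U]
    [FiniteDimensional K U] (f : V →ₗ[K] W) (g : V →ₗ[K] U) (h : Disjoint (ker f) (ker g)) :
    finrank K (ker f) ≤ finrank K U :=
  finrank_le_finrank_of_injective (f := g.domRestrict (ker f)) (injective_domRestrict_iff.2 h)

theorem exists_ker_not_le_of_iSup_ker_eq_top {ι : Type*} (f : ι → V →ₗ[K] W) {S : Set ι}
    (hS : ⨆ i ∈ S, ker (f i) = ⊤) {H : Submodule K V} (hH : H ≠ ⊤) :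
    ∃ i ∈ S, ¬ ker (f i) ≤ H := by
  by_contra! h
  exact hH (top_le_iff.1 (hS ▸ iSup₂_le h))

end

theorem MIII_mulVec_kernel_vectors (a : Fin 6 → ℂ) :
    MIII a *ᵥ ![a 2, a 3, -a 1, 0, a 0, 0] = 0 ∧
      MIII a *ᵥ ![a 4, a 5, 0, -a 1, 0, a 0] = 0 := by
  constructor <;> ext i <;> fin_cases i <;>
    simp [MIII, mulVec, dotProduct, Fin.sum_univ_succ] <;> ring

theorem MIII_transpose_mulVec_kernel_vectors (a : Fin 6 → ℂ) :
    (MIII a)ᵀ *ᵥ ![-a 1, 0, -a 2, -a 4, a 0, 0] = 0 ∧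
      (MIII a)ᵀ *ᵥ ![0, -a 1, -a 3, -a 5, 0, a 0] = 0 := by
  constructor <;> ext i <;> fin_cases i <;>
    simp [MIII, mulVec, dotProduct, Fin.sum_univ_succ] <;> ring

theorem Matrix.finrank_ker_mulVecLin_le_two {K : Type*} [Field K]
    {A : Matrix (Fin 6) (Fin 6) K}
    (hA : ∀ x, A *ᵥ x = 0 → x 4 = 0 → x 5 = 0 → x = 0) :
    finrank K (ker A.mulVecLin) ≤ 2 := by
  have := A.mulVecLin.finrank_ker_le_of_disjoint_ker (funLeft K K ![4, 5]) <|
    Submodule.disjoint_def.2 fun x hx hx' => hA x hx (congrFun hx' 0) (congrFun hx' 1)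
  simpa using this

theorem finrank_ker_MIII_le_two {a : Fin 6 → ℂ} (ha : a 0 ≠ 0) :
    finrank ℂ (ker (MIII a).mulVecLin) ≤ 2 := by
  refine finrank_ker_mulVecLin_le_two fun x hx h4 h5 => ?_
  have hrow := congrFun hx
  have h0 := hrow 0; have h1 := hrow 1; have h2 := hrow 2; have h3 := hrow 3
  simp [MIII, mulVec, dotProduct, Fin.sum_univ_succ, h4, h5, ha] at h0 h1 h2 h3
  ext i; fin_cases i <;> assumption

theorem finrank_ker_MIII_transpose_le_two {a : Fin 6 → ℂ} (ha : a 0 ≠ 0) :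
    finrank ℂ (ker (MIII a)ᵀ.mulVecLin) ≤ 2 := by
  refine finrank_ker_mulVecLin_le_two fun x hx h4 h5 => ?_
  have hrow := congrFun hx
  have h0 := hrow 0; have h1 := hrow 1; have h2 := hrow 2; have h3 := hrow 3
  simp [MIII, mulVec, dotProduct, Fin.sum_univ_succ, h4, h5, ha] at h0 h1 h2 h3
  ext i; fin_cases i <;> assumption

theorem iSup_ker_MIII_eq_top :
    ⨆ a ∈ {a : Fin 6 → ℂ | a 0 ≠ 0}, ker (MIII a).mulVecLin = ⊤ := by
  refine Submodule.eq_top_iff'.2 fun x => ?_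
  have mem {a : Fin 6 → ℂ} (ha : a 0 ≠ 0) {v : Fin 6 → ℂ} (hv : MIII a *ᵥ v = 0) :
      v ∈ ⨆ a ∈ {a : Fin 6 → ℂ | a 0 ≠ 0}, ker (MIII a).mulVecLin :=
    Submodule.mem_iSup_of_mem a (Submodule.mem_iSup_of_mem ha hv)
  have he := MIII_mulVec_kernel_vectors ![1, 0, 0, 0, 0, 0]
  have hp := (MIII_mulVec_kernel_vectors ![1, -x 2, x 0, x 1, 0, 0]).1
  have hq := (MIII_mulVec_kernel_vectors ![1, -x 3, 0, 0, 0, 0]).2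
  simp only [cons_val, neg_neg, neg_zero] at he hp hq
  have hx : x = ![x 0, x 1, x 2, 0, 1, 0] + ![0, 0, 0, x 3, 0, 1] +
      (x 4 - 1) • ![0, 0, 0, 0, 1, 0] + (x 5 - 1) • ![0, 0, 0, 0, 0, 1] := by
    ext i; fin_cases i <;> simp
  rw [hx]
  exact add_mem (add_mem (add_mem (mem one_ne_zero hp) (mem one_ne_zero hq))
    (Submodule.smul_mem _ _ (mem one_ne_zero he.1))) (Submodule.smul_mem _ _ (mem one_ne_zero he.2))

theorem iSup_ker_MIII_transpose_eq_top :
    ⨆ a ∈ {a : Fin 6 → ℂ | a 0 ≠ 0}, ker (MIII a)ᵀ.mulVecLin = ⊤ := by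
  refine Submodule.eq_top_iff'.2 fun x => ?_
  have mem {a : Fin 6 → ℂ} (ha : a 0 ≠ 0) {v : Fin 6 → ℂ} (hv : (MIII a)ᵀ *ᵥ v = 0) :
      v ∈ ⨆ a ∈ {a : Fin 6 → ℂ | a 0 ≠ 0}, ker (MIII a)ᵀ.mulVecLin :=
    Submodule.mem_iSup_of_mem a (Submodule.mem_iSup_of_mem ha hv)
  have he := MIII_transpose_mulVec_kernel_vectors ![1, 0, 0, 0, 0, 0]
  have hp := (MIII_transpose_mulVec_kernel_vectors ![1, -x 0, -x 2, 0, -x 3, 0]).1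
  have hq := (MIII_transpose_mulVec_kernel_vectors ![1, -x 1, 0, 0, 0, 0]).2
  simp only [cons_val, neg_neg, neg_zero] at he hp hq
  have hx : x = ![x 0, 0, x 2, x 3, 1, 0] + ![0, x 1, 0, 0, 0, 1] +
      (x 4 - 1) • ![0, 0, 0, 0, 1, 0] + (x 5 - 1) • ![0, 0, 0, 0, 0, 1] := by
    ext i; fin_cases i <;> simp
  rw [hx]
  exact add_mem (add_mem (add_mem (mem one_ne_zero hp) (mem one_ne_zero hq))
    (Submodule.smul_mem _ _ (mem one_ne_zero he.1))) (Submodule.smul_mem _ _ (mem one_ne_zero he.2))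

/-- `E_III` is primitive: for every hyperplane (`5`-dimensional subspace) `H ⊆ ℂ^6`
some `M_III(a)` restricted to `H` has rank at least `4`, and likewise for the
transposed maps. -/
theorem stmt3 :
    (∀ H : Submodule ℂ (Fin 6 → ℂ), Module.finrank ℂ H = 5 →
      ∃ a : Fin 6 → ℂ, 4 ≤ Module.finrank ℂ (H.map (MIII a).mulVecLin)) ∧
    (∀ H' : Submodule ℂ (Fin 6 → ℂ), Module.finrank ℂ H' = 5 →
      ∃ a : Fin 6 → ℂ, 4 ≤ Module.finrank ℂ (H'.map ((MIII a).transpose).mulVecLin)) := by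
  have ne_top {H : Submodule ℂ (Fin 6 → ℂ)} (hH : finrank ℂ H = 5) : H ≠ ⊤ := by
    rintro rfl; simp at hH
  refine ⟨fun H hH => ?_, fun H hH => ?_⟩
  · obtain ⟨a, ha, hker⟩ :=
      exists_ker_not_le_of_iSup_ker_eq_top _ iSup_ker_MIII_eq_top (ne_top hH)
    have := H.finrank_lt_finrank_map_add_finrank_ker _ hker
    have := finrank_ker_MIII_le_two ha
    exact ⟨a, by omega⟩
  · obtain ⟨a, ha, hker⟩ :=
      exists_ker_not_le_of_iSup_ker_eq_top _ iSup_ker_MIII_transpose_eq_top (ne_top hH)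
    have := H.finrank_lt_finrank_map_add_finrank_ker _ hker
    have := finrank_ker_MIII_transpose_le_two ha
    exact ⟨a, by omega⟩
end

section
/- Neither E_III nor E_IV is a compression space of rank 4: for each of these spaces E, there do not exist subspaces B' ⊆ ℂ^6 and C' ⊆ ℂ^6 with codim(B') + dim(C') ≤ 4 such that M(B') ⊆ C' for every M ∈ E. -/
open Matrix

/-- Case (IV) of the main theorem. -/
noncomputable def MIV (a : Fin 6 → ℂ) : Matrix (Fin 6) (Fin 6) ℂ :=
  !![a 0, a 1, 0, 0, -a 4, -a 5;
     0, a 0, 0, 0, 0, -a 4;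
     0, 0, a 0, a 1, a 2, a 3;
     0, 0, 0, a 0, 0, a 2;
     a 2, a 3, a 4, a 5, 0, 0;
     0, a 2, 0, a 4, 0, 0]

/-!
If `B'` has codimension at most one, a functional `φ ≠ 0` vanishing on `C'` has `φ ∘ M` in the
annihilator of `B'`, a line, for every `M ∈ E`: the transposed space maps `φ` into a line.
Otherwise `dim C' ≤ 2`. If `dim C' ≤ 1`, then `E` maps a nonzero `v ∈ B'` into a line; if
`dim C' = 2`, then `dim B' = 4` and `E` maps every vector of `B'` into a plane. For `E_III`, `E_IV`
and their transposes no nonzero vector is mapped into a line, and the vectors mapped into a plane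
vanish on at least three coordinates; both facts are read off from vanishing `2 × 2` and `3 × 3`
minors of the vectors `M(eₖ) v`.
-/

open Module Submodule

section Compression

variable {K V W ι : Type*} [Field K] [AddCommGroup V] [Module K V] [AddCommGroup W] [Module K W]

def IsCompressionSpace (f : ι → V →ₗ[K] W) (r : ℕ) : Prop :=
  ∃ (B : Submodule K V) (C : Submodule K W),
    (finrank K V - finrank K B) + finrank K C ≤ r ∧ ∀ i, B.map (f i) ≤ C

def imageSpan (f : ι → V →ₗ[K] W) (v : V) : Submodule K W :=
  span K (Set.range fun i => f i v)

lemma imageSpan_le_of_forall_map_le {f : ι → V →ₗ[K] W} {B : Submodule K V} {C : Submodule K W}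
    (hBC : ∀ i, B.map (f i) ≤ C) {v : V} (hv : v ∈ B) : imageSpan f v ≤ C :=
  span_le.2 <| Set.range_subset_iff.2 fun i => hBC i (mem_map_of_mem hv)

lemma map_dualMap_dualAnnihilator_le {f : V →ₗ[K] W} {B : Submodule K V} {C : Submodule K W}
    (hBC : B.map f ≤ C) : C.dualAnnihilator.map f.dualMap ≤ B.dualAnnihilator := by
  rintro _ ⟨φ, hφ, rfl⟩
  rw [mem_dualAnnihilator]
  intro v hv
  exact (mem_dualAnnihilator φ).1 hφ _ (hBC (mem_map_of_mem hv))

theorem not_isCompressionSpace_four [FiniteDimensional K V] [FiniteDimensional K W]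
    {f : ι → V →ₗ[K] W} (hV : 5 ≤ finrank K V) (hW : 4 < finrank K W)
    (hf : ∀ v, finrank K (imageSpan f v) ≤ 1 → v = 0)
    (hf_dual : ∀ φ, finrank K (imageSpan (fun i => (f i).dualMap) φ) ≤ 1 → φ = 0)
    (hf_two : ∀ B : Submodule K V, (∀ v ∈ B, finrank K (imageSpan f v) ≤ 2) →
      finrank K B + 3 ≤ finrank K V) :
    ¬ IsCompressionSpace f 4 := by
  rintro ⟨B, C, hrank, hBC⟩
  have hBV := B.finrank_le
  obtain hcodim | hcodim := le_or_gt (finrank K V) (finrank K B + 1)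
  · obtain ⟨φ, hφC, hφ⟩ : ∃ φ ∈ C.dualAnnihilator, φ ≠ 0 := by
      refine exists_mem_ne_zero_of_ne_bot ?_
      rw [Ne, dualAnnihilator_eq_bot_iff]
      rintro rfl
      rw [finrank_top] at hrank
      omega
    refine hφ (hf_dual φ ?_)
    have hB := Subspace.finrank_add_finrank_dualAnnihilator_eq B
    have hφB : imageSpan (fun i => (f i).dualMap) φ ≤ B.dualAnnihilator :=
      imageSpan_le_of_forall_map_le (f := fun i => (f i).dualMap)
        (fun i => map_dualMap_dualAnnihilator_le (hBC i)) hφC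
    have := finrank_mono hφB
    omega
  obtain hC | hC := le_or_gt (finrank K C) 1
  · obtain ⟨v, hvB, hv⟩ : ∃ v ∈ B, v ≠ 0 := by
      refine exists_mem_ne_zero_of_ne_bot ?_
      rintro rfl
      rw [finrank_bot] at hrank
      omega
    exact hv (hf v ((finrank_mono (imageSpan_le_of_forall_map_le hBC hvB)).trans hC))
  · have hC2 : finrank K C ≤ 2 := by omega
    have := hf_two B fun v hv => (finrank_mono (imageSpan_le_of_forall_map_le hBC hv)).trans hC2
    omega

end Compression

section Matrix

variable {K ι m n : Type*} [Field K] [Fintype n]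

theorem Matrix.det_eq_zero_of_finrank_span_lt {κ : Type*} [Fintype κ] [DecidableEq κ]
    (x : ι → n → K) (r : κ → ι) (c : κ → n)
    (h : finrank K (span K (Set.range x)) < Fintype.card κ) :
    (Matrix.of fun a b => x (r a) (c b)).det = 0 := by
  by_contra hdet
  have hxr : LinearIndependent K (x ∘ r) :=
    .of_comp (LinearMap.funLeft K K c) (linearIndependent_rows_of_det_ne_zero hdet)
  have := finrank_mono (R := K) (span_mono (Set.range_comp_subset_range r x))
  rw [finrank_span_eq_card hxr] at this
  omega

theorem finrank_add_card_le_of_forall_apply_eq_zero [DecidableEq n] {B : Submodule K (n → K)}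
    {S : Finset n} (h : ∀ v ∈ B, ∀ i ∈ S, v i = 0) : finrank K B + S.card ≤ Fintype.card n := by
  let restrict : B →ₗ[K] ({i // i ∉ S} → K) := LinearMap.funLeft K K Subtype.val ∘ₗ B.subtype
  have hinj : Function.Injective restrict := by
    rw [← LinearMap.ker_eq_bot, LinearMap.ker_eq_bot']
    intro v hv
    ext i
    by_cases hi : i ∈ S
    · exact h v v.2 i hi
    · exact congrFun hv ⟨i, hi⟩
  have := LinearMap.finrank_le_finrank_of_injective hinj
  rw [Module.finrank_fintype_fun_eq_card, Fintype.card_subtype_compl, Fintype.card_coe] at this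
  have := S.card_le_univ
  omega

variable [Fintype m] [DecidableEq m] [DecidableEq n]

lemma dualMap_mulVecLin_dotProductEquiv (A : Matrix m n K) (w : m → K) :
    A.mulVecLin.dualMap (dotProductEquiv K m w) = dotProductEquiv K n (Aᵀ *ᵥ w) := by
  refine LinearMap.ext fun x => ?_
  simp only [LinearMap.dualMap_apply, dotProductEquiv_apply_apply, mulVecLin_apply,
    dotProduct_mulVec, mulVec_transpose]

lemma finrank_imageSpan_dualMap_mulVecLin (M : ι → Matrix m n K) (w : m → K) :
    finrank K (imageSpan (fun i => (M i).mulVecLin.dualMap) (dotProductEquiv K m w)) =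
      finrank K (imageSpan (fun i => (M i)ᵀ.mulVecLin) w) := by
  have : imageSpan (fun i => (M i).mulVecLin.dualMap) (dotProductEquiv K m w) =
      (imageSpan (fun i => (M i)ᵀ.mulVecLin) w).map (dotProductEquiv K n).toLinearMap := by
    simp only [imageSpan, map_span, ← Set.range_comp, Function.comp_def, mulVecLin_apply,
      LinearEquiv.coe_coe, dualMap_mulVecLin_dotProductEquiv]
  rw [this, LinearEquiv.finrank_map_eq]

theorem not_isCompressionSpace_mulVecLin_four (M : ι → Matrix m n K)
    (hn : 5 ≤ Fintype.card n) (hm : 4 < Fintype.card m)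
    (hM : ∀ v, finrank K (imageSpan (fun i => (M i).mulVecLin) v) ≤ 1 → v = 0)
    (hMT : ∀ w, finrank K (imageSpan (fun i => (M i)ᵀ.mulVecLin) w) ≤ 1 → w = 0)
    (hM_two : ∃ S : Finset n, 3 ≤ S.card ∧
      ∀ v, finrank K (imageSpan (fun i => (M i).mulVecLin) v) ≤ 2 → ∀ i ∈ S, v i = 0) :
    ¬ IsCompressionSpace (fun i => (M i).mulVecLin) 4 := by
  obtain ⟨S, hS, hvS⟩ := hM_two
  refine not_isCompressionSpace_four (by simpa) (by simpa) hM (fun φ hφ => ?_) (fun B hB => ?_)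
  · obtain ⟨w, rfl⟩ := (dotProductEquiv K m).surjective φ
    rw [finrank_imageSpan_dualMap_mulVecLin] at hφ
    simp [hMT w hφ]
  · have := finrank_add_card_le_of_forall_apply_eq_zero fun v hv => hvS v (hB v hv)
    rw [Module.finrank_fintype_fun_eq_card]
    omega

end Matrix

namespace MIII

attribute [local simp] MIII mulVec mulVec_transpose vecMul dotProduct Fin.sum_univ_six
  det_fin_two det_fin_three

/- For `k = 0, …, 5`, `MIII (Pi.single k 1)` maps `v` to `(v₀,v₁,v₂,v₃,0,0)`, `(0,0,v₄,v₅,v₀,v₁)`,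
`(-v₄,0,0,0,v₂,0)`, `(0,-v₄,0,0,0,v₂)`, `(-v₅,0,0,0,v₃,0)`, `(0,-v₅,0,0,0,v₃)`, and its transpose
maps `w` to `(w₀,w₁,w₂,w₃,0,0)`, `(w₄,w₅,0,0,w₂,w₃)`, `(0,0,w₄,0,-w₀,0)`, `(0,0,w₅,0,-w₁,0)`,
`(0,0,0,w₄,0,-w₀)`, `(0,0,0,w₅,0,-w₁)`. Each minor below is `±` a power of one coordinate. -/

lemma eq_zero_of_finrank_imageSpan_le_one {v : Fin 6 → ℂ}
    (h : finrank ℂ (imageSpan (fun a => (MIII a).mulVecLin) v) ≤ 1) : v = 0 := by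
  have minor (a b : Fin 6 → ℂ) (k l : Fin 6) :=
    det_eq_zero_of_finrank_span_lt _ ![a, b] ![k, l] (h.trans_lt (by simp))
  ext k
  fin_cases k
  · simpa using minor (Pi.single 0 1) (Pi.single 1 1) 0 4
  · simpa using minor (Pi.single 0 1) (Pi.single 1 1) 1 5
  · simpa using minor (Pi.single 2 1) (Pi.single 3 1) 4 5
  · simpa using minor (Pi.single 4 1) (Pi.single 5 1) 4 5
  · simpa using minor (Pi.single 2 1) (Pi.single 3 1) 0 1
  · simpa using minor (Pi.single 4 1) (Pi.single 5 1) 0 1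

lemma eq_zero_of_finrank_imageSpan_transpose_le_one {w : Fin 6 → ℂ}
    (h : finrank ℂ (imageSpan (fun a => (MIII a)ᵀ.mulVecLin) w) ≤ 1) : w = 0 := by
  have minor (a b : Fin 6 → ℂ) (k l : Fin 6) :=
    det_eq_zero_of_finrank_span_lt _ ![a, b] ![k, l] (h.trans_lt (by simp))
  ext k
  fin_cases k
  · simpa using minor (Pi.single 2 1) (Pi.single 4 1) 4 5
  · simpa using minor (Pi.single 3 1) (Pi.single 5 1) 4 5
  · simpa using minor (Pi.single 0 1) (Pi.single 1 1) 2 4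
  · simpa using minor (Pi.single 0 1) (Pi.single 1 1) 3 5
  · simpa using minor (Pi.single 2 1) (Pi.single 4 1) 2 3
  · simpa using minor (Pi.single 3 1) (Pi.single 5 1) 2 3

lemma apply_eq_zero_of_finrank_imageSpan_le_two {v : Fin 6 → ℂ}
    (h : finrank ℂ (imageSpan (fun a => (MIII a).mulVecLin) v) ≤ 2) :
    ∀ i ∈ ({2, 3, 4, 5} : Finset (Fin 6)), v i = 0 := by
  have minor (a b c : Fin 6 → ℂ) (k l m : Fin 6) :=
    det_eq_zero_of_finrank_span_lt _ ![a, b, c] ![k, l, m] (h.trans_lt (by simp))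
  simp only [Finset.mem_insert, Finset.mem_singleton, forall_eq_or_imp, forall_eq]
  refine ⟨?_, ?_, ?_, ?_⟩
  · simpa using minor (Pi.single 0 1) (Pi.single 2 1) (Pi.single 3 1) 2 4 5
  · simpa using minor (Pi.single 0 1) (Pi.single 4 1) (Pi.single 5 1) 3 4 5
  · simpa using minor (Pi.single 1 1) (Pi.single 2 1) (Pi.single 3 1) 0 1 2
  · simpa using minor (Pi.single 1 1) (Pi.single 4 1) (Pi.single 5 1) 0 1 3

theorem not_isCompressionSpace_four : ¬ IsCompressionSpace (fun a => (MIII a).mulVecLin) 4 :=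
  not_isCompressionSpace_mulVecLin_four MIII (by simp) (by simp)
    (fun _ => eq_zero_of_finrank_imageSpan_le_one)
    (fun _ => eq_zero_of_finrank_imageSpan_transpose_le_one)
    ⟨{2, 3, 4, 5}, by decide, fun _ => apply_eq_zero_of_finrank_imageSpan_le_two⟩

end MIII

namespace MIV

attribute [local simp] MIV mulVec mulVec_transpose vecMul dotProduct Fin.sum_univ_six
  det_fin_two det_fin_three

/- For `k = 0, …, 5`, `MIV (Pi.single k 1)` maps `v` to `(v₀,v₁,v₂,v₃,0,0)`, `(v₁,0,v₃,0,0,0)`,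
`(0,0,v₄,v₅,v₀,v₁)`, `(0,0,v₅,0,v₁,0)`, `(-v₄,-v₅,0,0,v₂,v₃)`, `(-v₅,0,0,0,v₃,0)`, and its
transpose maps `w` to `(w₀,w₁,w₂,w₃,0,0)`, `(0,w₀,0,w₂,0,0)`, `(w₄,w₅,0,0,w₂,w₃)`,
`(0,w₄,0,0,0,w₂)`, `(0,0,w₄,w₅,-w₀,-w₁)`, `(0,0,0,w₄,0,-w₀)`. -/

lemma eq_zero_of_finrank_imageSpan_le_one {v : Fin 6 → ℂ}
    (h : finrank ℂ (imageSpan (fun a => (MIV a).mulVecLin) v) ≤ 1) : v = 0 := by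
  have minor (a b : Fin 6 → ℂ) (k l : Fin 6) :=
    det_eq_zero_of_finrank_span_lt _ ![a, b] ![k, l] (h.trans_lt (by simp))
  ext k
  fin_cases k
  · simpa using minor (Pi.single 0 1) (Pi.single 2 1) 0 4
  · simpa using minor (Pi.single 1 1) (Pi.single 3 1) 0 4
  · simpa using minor (Pi.single 0 1) (Pi.single 4 1) 2 4
  · simpa using minor (Pi.single 1 1) (Pi.single 5 1) 2 4
  · simpa using minor (Pi.single 2 1) (Pi.single 4 1) 0 2
  · simpa using minor (Pi.single 3 1) (Pi.single 5 1) 0 2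

lemma eq_zero_of_finrank_imageSpan_transpose_le_one {w : Fin 6 → ℂ}
    (h : finrank ℂ (imageSpan (fun a => (MIV a)ᵀ.mulVecLin) w) ≤ 1) : w = 0 := by
  have minor (a b : Fin 6 → ℂ) (k l : Fin 6) :=
    det_eq_zero_of_finrank_span_lt _ ![a, b] ![k, l] (h.trans_lt (by simp))
  ext k
  fin_cases k
  · simpa using minor (Pi.single 1 1) (Pi.single 5 1) 1 5
  · simpa using minor (Pi.single 0 1) (Pi.single 4 1) 1 5
  · simpa using minor (Pi.single 1 1) (Pi.single 3 1) 3 5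
  · simpa using minor (Pi.single 0 1) (Pi.single 2 1) 3 5
  · simpa using minor (Pi.single 3 1) (Pi.single 5 1) 1 3
  · simpa using minor (Pi.single 2 1) (Pi.single 4 1) 1 3

lemma apply_eq_zero_of_finrank_imageSpan_le_two {v : Fin 6 → ℂ}
    (h : finrank ℂ (imageSpan (fun a => (MIV a).mulVecLin) v) ≤ 2) :
    ∀ i ∈ ({1, 3, 5} : Finset (Fin 6)), v i = 0 := by
  have minor (a b c : Fin 6 → ℂ) (k l m : Fin 6) :=
    det_eq_zero_of_finrank_span_lt _ ![a, b, c] ![k, l, m] (h.trans_lt (by simp))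
  simp only [Finset.mem_insert, Finset.mem_singleton, forall_eq_or_imp, forall_eq]
  refine ⟨?_, ?_, ?_⟩
  · simpa using minor (Pi.single 1 1) (Pi.single 3 1) (Pi.single 2 1) 0 4 5
  · simpa using minor (Pi.single 1 1) (Pi.single 5 1) (Pi.single 4 1) 2 4 5
  · simpa using minor (Pi.single 3 1) (Pi.single 5 1) (Pi.single 2 1) 0 2 3

theorem not_isCompressionSpace_four : ¬ IsCompressionSpace (fun a => (MIV a).mulVecLin) 4 :=
  not_isCompressionSpace_mulVecLin_four MIV (by simp) (by simp)
    (fun _ => eq_zero_of_finrank_imageSpan_le_one)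
    (fun _ => eq_zero_of_finrank_imageSpan_transpose_le_one)
    ⟨{1, 3, 5}, by decide, fun _ => apply_eq_zero_of_finrank_imageSpan_le_two⟩

end MIV

/-- Neither `E_III` nor `E_IV` is a compression space of rank `4`: there are no
subspaces `B', C' ⊆ ℂ^6` with `codim B' + dim C' ≤ 4` such that every matrix of
the space maps `B'` into `C'`. -/
theorem stmt5 :
    (¬ ∃ (B' C' : Submodule ℂ (Fin 6 → ℂ)),
      (6 - Module.finrank ℂ B') + Module.finrank ℂ C' ≤ 4 ∧
      ∀ a : Fin 6 → ℂ, B'.map (MIII a).mulVecLin ≤ C') ∧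
    (¬ ∃ (B' C' : Submodule ℂ (Fin 6 → ℂ)),
      (6 - Module.finrank ℂ B') + Module.finrank ℂ C' ≤ 4 ∧
      ∀ a : Fin 6 → ℂ, B'.map (MIV a).mulVecLin ≤ C') :=
  ⟨by simpa [IsCompressionSpace] using MIII.not_isCompressionSpace_four,
    by simpa [IsCompressionSpace] using MIV.not_isCompressionSpace_four⟩
end

section
/- Let T ∈ A ⊗ B ⊗ C (finite-dimensional complex vector spaces) be such that for every α ∈ A* the induced linear map T(α) : B* → C has rank at most r, and let T' ∈ ℂ^m ⊗ ℂ^m ⊗ ℂ^m be concise and of minimal border rank, i.e., T' lies in the closure of the set of tensors of rank at most m. Then for every ψ ∈ (A ⊗ A')*, the slice (T ⊠ T')(ψ) : (B ⊗ B')* → C ⊗ C' of the Kronecker product T ⊠ T' ∈ (A⊗A') ⊗ (B⊗B') ⊗ (C⊗C') has rank at most rm. -/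
open Matrix

/-- A three-way tensor in `ℂ^a ⊗ ℂ^b ⊗ ℂ^c`, in coordinates. -/
abbrev Tensor3 (a b c : ℕ) := Fin a → Fin b → Fin c → ℂ

/-- The set of tensors of rank at most `r` in `ℂ^a ⊗ ℂ^b ⊗ ℂ^c`. -/
def rankLE (a b c r : ℕ) : Set (Tensor3 a b c) :=
  {T | ∃ (u : Fin r → Fin a → ℂ) (v : Fin r → Fin b → ℂ) (w : Fin r → Fin c → ℂ),
    T = fun i j k => ∑ s, u s i * v s j * w s k}

/-- The tensorSlice `T(α) : B^* → C` of a tensor, as a matrix. -/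
noncomputable def tensorSlice {a b c : ℕ} (T : Tensor3 a b c) (α : Fin a → ℂ) : Matrix (Fin b) (Fin c) ℂ :=
  Matrix.of fun j k => ∑ i, α i * T i j k

/-!
A rank-`k` tensor `S = ∑ₛ uₛ ⊗ vₛ ⊗ wₛ` makes every slice of `T ⊠ S` a sum of `k` matrices
`T(αₛ) ⊗ vₛwₛᵀ`, each of rank at most `r`, so that slice has rank at most `r·k`. The slice
depends continuously on `S`, and `{M | rank M ≤ r·k}` is closed, being cut out by the vanishing
of all `(r·k + 1)`-minors; hence the bound passes to the limit `T'`.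
-/

open Kronecker

namespace Matrix

variable {m n p q K : Type*} [Fintype n] [Field K]

theorem rank_finsetSum_le {ι : Type*} (s : Finset ι) (A : ι → Matrix m n K) :
    (∑ i ∈ s, A i).rank ≤ ∑ i ∈ s, (A i).rank := by
  classical
  have hcast (M : Matrix m n K) : (M.rank : Cardinal) = LinearMap.rank (toLin' M) :=
    Module.finrank_eq_rank _ _
  rw [← Nat.cast_le (α := Cardinal), Nat.cast_sum, hcast, map_sum]
  simpa only [hcast] using LinearMap.rank_finsetSum_le s fun i => toLin' (A i)

variable [Fintype m]

theorem exists_linearIndependent_rows_of_le_rank (M : Matrix m n K) {k : ℕ} (hk : k ≤ M.rank) :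
    ∃ f : Fin k → m, LinearIndependent K (M.row ∘ f) := by
  obtain ⟨κ, a, ha, hspan, hli⟩ := exists_linearIndependent' K M.row
  have : Finite κ := Finite.of_injective a ha
  have := Fintype.ofFinite κ
  have hcard : Fintype.card κ = M.rank := by
    rw [rank_eq_finrank_span_row, ← hspan, finrank_span_eq_card hli]
  obtain ⟨e⟩ := Function.Embedding.nonempty_of_card_le (by simpa [hcard] using hk :
    Fintype.card (Fin k) ≤ Fintype.card κ)
  exact ⟨a ∘ e, hli.comp e e.injective⟩

theorem exists_isUnit_submatrix_of_le_rank (M : Matrix m n K) {k : ℕ} (hk : k ≤ M.rank) :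
    ∃ (f : Fin k → m) (g : Fin k → n), IsUnit (M.submatrix f g) := by
  obtain ⟨f, hf⟩ := M.exists_linearIndependent_rows_of_le_rank hk
  have hrank : (M.submatrix f id)ᵀ.rank = k := by
    rw [rank_transpose, LinearIndependent.rank_matrix (M := M.submatrix f id) hf, Fintype.card_fin]
  obtain ⟨g, hg⟩ := (M.submatrix f id)ᵀ.exists_linearIndependent_rows_of_le_rank hrank.ge
  exact ⟨f, g, linearIndependent_cols_iff_isUnit.mp hg⟩

theorem lt_rank_iff_exists_det_submatrix_ne_zero (M : Matrix m n K) (k : ℕ) :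
    k < M.rank ↔ ∃ (f : Fin (k + 1) → m) (g : Fin (k + 1) → n), (M.submatrix f g).det ≠ 0 := by
  constructor
  · intro hk
    obtain ⟨f, g, hfg⟩ := M.exists_isUnit_submatrix_of_le_rank hk
    exact ⟨f, g, ((isUnit_iff_isUnit_det _).mp hfg).ne_zero⟩
  · rintro ⟨f, g, hfg⟩
    have hsub := rank_of_isUnit _ ((isUnit_iff_isUnit_det _).mpr (Ne.isUnit hfg))
    rw [Fintype.card_fin] at hsub
    have hle := M.rank_submatrix_le f g
    rwa [hsub] at hle

theorem isClosed_setOf_rank_le [TopologicalSpace K] [IsTopologicalRing K] [T1Space K] (k : ℕ) :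
    IsClosed {M : Matrix m n K | M.rank ≤ k} := by
  have hcompl : {M : Matrix m n K | M.rank ≤ k}ᶜ =
      ⋃ (f : Fin (k + 1) → m) (g : Fin (k + 1) → n), {M | (M.submatrix f g).det ≠ 0} := by
    ext M
    simp only [Set.mem_compl_iff, Set.mem_ofPred_eq, not_le, Set.mem_iUnion]
    exact M.lt_rank_iff_exists_det_submatrix_ne_zero k
  rw [← isOpen_compl_iff, hcompl]
  exact isOpen_iUnion fun f => isOpen_iUnion fun g =>
    isOpen_ne_fun (continuous_id.matrix_submatrix f g).matrix_det continuous_const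

theorem rank_kronecker_vecMulVec_le [DecidableEq m] [DecidableEq n] [Fintype q]
    (A : Matrix m n K) (v : p → K) (w : q → K) :
    (A ⊗ₖ vecMulVec v w).rank ≤ A.rank := by
  have hfactor : A ⊗ₖ vecMulVec v w =
      (of fun (x : m × p) (i : m) => if i = x.1 then v x.2 else 0) * A *
        of fun (j : n) (y : n × q) => if j = y.1 then w y.2 else 0 := by
    ext x y
    simp only [kroneckerMap_apply, vecMulVec_apply, mul_apply, of_apply, ite_mul, zero_mul,
      Finset.sum_ite_eq', Finset.mem_univ, ↓reduceIte, mul_ite, mul_zero]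
    ring
  rw [hfactor]
  exact (rank_mul_le_left _ _).trans (rank_mul_le_right _ _)

end Matrix

section KroneckerSlice

variable {a b c : ℕ} (T : Tensor3 a b c)

noncomputable def kroneckerSlice {a' b' c' : ℕ} (S : Tensor3 a' b' c') (ψ : Fin a × Fin a' → ℂ) :
    Matrix (Fin b × Fin b') (Fin c × Fin c') ℂ :=
  Matrix.of fun p q => ∑ x : Fin a × Fin a', ψ x * (T x.1 p.1 q.1 * S x.2 p.2 q.2)

theorem continuous_kroneckerSlice {a' b' c' : ℕ} (ψ : Fin a × Fin a' → ℂ) :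
    Continuous fun S : Tensor3 a' b' c' => kroneckerSlice T S ψ := by
  unfold kroneckerSlice
  fun_prop

theorem kroneckerSlice_sum_triple_products {a' b' c' k : ℕ} (u : Fin k → Fin a' → ℂ)
    (v : Fin k → Fin b' → ℂ) (w : Fin k → Fin c' → ℂ) (ψ : Fin a × Fin a' → ℂ) :
    kroneckerSlice T (fun i j l => ∑ s, u s i * v s j * w s l) ψ =
      ∑ s : Fin k,
        tensorSlice T (fun i => ∑ i', ψ (i, i') * u s i') ⊗ₖ Matrix.vecMulVec (v s) (w s) := by
  ext p q
  simp only [kroneckerSlice, tensorSlice, Matrix.of_apply, Matrix.sum_apply,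
    Matrix.kroneckerMap_apply, Matrix.vecMulVec_apply, Fintype.sum_prod_type,
    Finset.mul_sum, Finset.sum_mul]
  conv_rhs => rw [Finset.sum_comm]
  refine Finset.sum_congr rfl fun i _ => ?_
  conv_rhs => rw [Finset.sum_comm]
  refine Finset.sum_congr rfl fun i' _ => Finset.sum_congr rfl fun s _ => ?_
  ring

theorem rank_kroneckerSlice_le_of_mem_rankLE {k r : ℕ}
    (hT : ∀ α : Fin a → ℂ, (tensorSlice T α).rank ≤ r) {S : Tensor3 k k k}
    (hS : S ∈ rankLE k k k k) (ψ : Fin a × Fin k → ℂ) :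
    (kroneckerSlice T S ψ).rank ≤ r * k := by
  obtain ⟨u, v, w, rfl⟩ := hS
  rw [kroneckerSlice_sum_triple_products]
  calc _ ≤ ∑ s, (tensorSlice T (fun i => ∑ i', ψ (i, i') * u s i') ⊗ₖ
          Matrix.vecMulVec (v s) (w s)).rank := Matrix.rank_finsetSum_le _ _
    _ ≤ ∑ _s : Fin k, r := Finset.sum_le_sum fun s _ =>
          (Matrix.rank_kronecker_vecMulVec_le _ _ _).trans (hT _)
    _ = r * k := by simp [mul_comm]

end KroneckerSlice

theorem stmt7_general (a b c r m : ℕ)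
    (T : Tensor3 a b c)
    (hT : ∀ α : Fin a → ℂ, (tensorSlice T α).rank ≤ r)
    (T' : Tensor3 m m m)
    (hmbr : T' ∈ closure (rankLE m m m m)) :
    ∀ ψ : Fin a × Fin m → ℂ,
      (Matrix.of fun (p : Fin b × Fin m) (q : Fin c × Fin m) =>
        ∑ x : Fin a × Fin m, ψ x * (T x.1 p.1 q.1 * T' x.2 p.2 q.2)).rank ≤ r * m := by
  intro ψ
  have hlimit : kroneckerSlice T T' ψ ∈ closure {M | M.rank ≤ r * m} :=
    map_mem_closure (f := fun S => kroneckerSlice T S ψ) (continuous_kroneckerSlice T ψ) hmbr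
      fun S hS => rank_kroneckerSlice_le_of_mem_rankLE T hT hS ψ
  exact (Matrix.isClosed_setOf_rank_le (r * m)).closure_subset hlimit

/-- If every tensorSlice `T(α)` of `T ∈ A ⊗ B ⊗ C` has rank at most `r` and
`T' ∈ ℂ^m ⊗ ℂ^m ⊗ ℂ^m` is concise of minimal border rank (it lies in the closure
of the set of tensors of rank at most `m`), then every tensorSlice of the Kronecker
product `T ⊠ T'` has rank at most `r·m`. -/
theorem stmt7 (a b c r m : ℕ)
    (T : Tensor3 a b c)
    (hT : ∀ α : Fin a → ℂ, (tensorSlice T α).rank ≤ r)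
    (T' : Tensor3 m m m)
    (hconciseA : Function.Injective fun (α : Fin m → ℂ) => fun (j k : Fin m) => ∑ i, α i * T' i j k)
    (hconciseB : Function.Injective fun (β : Fin m → ℂ) => fun (i k : Fin m) => ∑ j, β j * T' i j k)
    (hconciseC : Function.Injective fun (γ : Fin m → ℂ) => fun (i j : Fin m) => ∑ k, γ k * T' i j k)
    (hmbr : T' ∈ closure (rankLE m m m m)) :
    ∀ ψ : Fin a × Fin m → ℂ,
      (Matrix.of fun (p : Fin b × Fin m) (q : Fin c × Fin m) =>
        ∑ x : Fin a × Fin m, ψ x * (T x.1 p.1 q.1 * T' x.2 p.2 q.2)).rank ≤ r * m :=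
  stmt7_general a b c r m T hT T' hmbr
end

section
/- (Atkinson normal form, necessity.) Let E ⊆ Matrix(b,c,ℂ) be a linear subspace in which every matrix has rank at most r, and suppose E contains the matrix X₁ whose upper-left r×r block is the identity and all other entries are 0. Then every X ∈ E, written in block form X = [[x, W],[U, Z]] with respect to the blocking (r, b−r) × (r, c−r), satisfies Z = 0 and U·x^k·W = 0 for all k ≥ 0. -/
/-!
Adding `t` times `[[x, W], [U, Z]]` to the block idempotent gives `[[1 + t x, t W], [t U, t Z]]`
in `E`. Its rank is at most `r`, so its Schur complement vanishes:
`det (1 + t x) • Z = t • U * adj (1 + t x) * W` whenever `t ≠ 0` and `1 + t x` is invertible.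
Both sides are polynomial in `t` and agree at infinitely many points, so this is an identity of
polynomial matrices in an indeterminate `X`. With `N = 1 + X • x`, `det N` has
constant term `1`: reducing mod `X` gives `Z = 0` and `U * adj N * W = 0`, and then the relation
`adj N = det N • 1 - X • x * adj N` peels off `U * x ^ k * W ≡ 0 [mod X]` one power at a time.
-/

open Matrix Polynomial

variable {K : Type*} [Field K] {m n o : Type*} [Fintype m] [DecidableEq m]

theorem Matrix.schur_complement_eq_zero_of_rank_fromBlocks_le [Fintype o] (A : Matrix m m K)
    (B : Matrix m o K) (C : Matrix n m K) (D : Matrix n o K) (hA : IsUnit A.det)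
    (h : (fromBlocks A B C D).rank ≤ Fintype.card m) : D - C * A⁻¹ * B = 0 := by
  let := A.invertibleOfIsUnitDet hA
  ext i j
  by_contra hij
  set M := (fromBlocks A B C D).submatrix (Sum.map id fun _ : Unit => i)
    (Sum.map id fun _ : Unit => j)
  have hM : M = fromBlocks A (B.submatrix id fun _ => j) (C.submatrix (fun _ => i) id)
      (D.submatrix (fun _ => i) fun _ => j) := by
    ext (a | a) (b | b) <;> rfl
  have hdet : IsUnit M.det := by
    rw [hM, det_fromBlocks₁₁]
    refine hA.mul ?_
    rw [det_unique, isUnit_iff_ne_zero]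
    simpa [invOf_eq_nonsing_inv, Matrix.mul_apply] using hij
  have := (rank_of_isUnit M ((isUnit_iff_isUnit_det M).mpr hdet)).symm.trans_le
    ((rank_submatrix_le _ _ _).trans h)
  simp at this

theorem Matrix.evalRingHom_mapMatrix_one_add_X_smul (x : Matrix m m K) (t : K) :
    (evalRingHom t).mapMatrix (1 + (X : K[X]) • x.map C) = 1 + t • x := by
  ext i j
  by_cases hij : i = j <;> simp [hij, mul_comm t]

theorem eq_zero_of_smul_map_C_eq_X_smul {d : K[X]} (hd : d.eval 0 ≠ 0) {M : Matrix n o K}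
    {G : Matrix n o K[X]} (h : d • M.map C = (X : K[X]) • G) : M = 0 ∧ G = 0 := by
  have hM : M = 0 := by
    ext i j
    simpa [hd] using congrArg (fun M => (M i j).eval 0) h
  refine ⟨hM, Matrix.ext fun i j => ?_⟩
  simpa [hM, X_ne_zero] using (congrFun (congrFun h i) j).symm

theorem eq_zero_and_mul_pow_mul_eq_zero_of_det_smul_map_C_eq_X_smul {x : Matrix m m K}
    {W : Matrix m o K} {U : Matrix n m K} {Z : Matrix n o K}
    (h : (1 + (X : K[X]) • x.map C).det • Z.map C =
      (X : K[X]) • (U.map C * (1 + (X : K[X]) • x.map C).adjugate * W.map C)) :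
    Z = 0 ∧ ∀ k : ℕ, U * x ^ k * W = 0 := by
  generalize hN : 1 + (X : K[X]) • x.map C = N at h
  have hN0 : N.det.eval 0 ≠ 0 := by simp [← hN, eval_det_add_X_smul (1 : Matrix m m K[X]) x]
  obtain ⟨G, hG⟩ : ∃ G : ℕ → Matrix n o K[X],
      ∀ k, G k = U.map C * x.map C ^ k * N.adjugate * W.map C := ⟨_, fun _ => rfl⟩
  have hpow : ∀ k, (x ^ k).map C = x.map C ^ k := fun k => map_pow C.mapMatrix x k
  have hrec : ∀ k, N.det • (U * x ^ k * W).map C = (X : K[X]) • G (k + 1) + G k := by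
    intro k
    have hadj : N.adjugate + (X : K[X]) • (x.map C * N.adjugate) = N.det • 1 := by
      rw [← mul_adjugate, ← hN, Matrix.add_mul, Matrix.one_mul, Matrix.smul_mul]
    rw [hG, hG, Matrix.map_mul, Matrix.map_mul, hpow]
    calc N.det • (U.map C * x.map C ^ k * W.map C)
        = U.map C * x.map C ^ k * (N.det • (1 : Matrix m m K[X])) * W.map C := by
          rw [Matrix.mul_smul, Matrix.mul_one, Matrix.smul_mul]
      _ = _ := by
          rw [← hadj, pow_succ]
          simp only [Matrix.mul_add, Matrix.add_mul, Matrix.mul_smul, Matrix.smul_mul,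
            Matrix.mul_assoc]
          abel
  obtain ⟨hZ, hG0⟩ := eq_zero_of_smul_map_C_eq_X_smul (G := G 0) hN0
    (by rw [hG, pow_zero, Matrix.mul_one, h])
  have hGk : ∀ k, G k = 0 := by
    intro k
    induction k with
    | zero => exact hG0
    | succ k ih => exact (eq_zero_of_smul_map_C_eq_X_smul hN0 (by rw [hrec k, ih, add_zero])).2
  exact ⟨hZ, fun k => (eq_zero_of_smul_map_C_eq_X_smul (G := G (k + 1)) hN0
    (by rw [hrec k, hGk k, add_zero])).1⟩

section BoundedRankSubspace

variable [Fintype o] (E : Submodule K (Matrix (m ⊕ n) (m ⊕ o) K))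
  (hrank : ∀ X ∈ E, X.rank ≤ Fintype.card m) (hX1 : fromBlocks (1 : Matrix m m K) 0 0 0 ∈ E)
  {x : Matrix m m K} {W : Matrix m o K} {U : Matrix n m K} {Z : Matrix n o K}
  (hX : fromBlocks x W U Z ∈ E)
include hrank hX1 hX

theorem det_smul_eq_smul_mul_adjugate_mul_of_mem {t : K} (ht : t ≠ 0)
    (hdet : (1 + t • x).det ≠ 0) :
    (1 + t • x).det • Z = t • (U * (1 + t • x).adjugate * W) := by
  have hmem : fromBlocks (1 + t • x) (t • W) (t • U) (t • Z) ∈ E := by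
    simpa [fromBlocks_smul, fromBlocks_add] using E.add_mem hX1 (E.smul_mem t hX)
  have hschur := sub_eq_zero.mp <| schur_complement_eq_zero_of_rank_fromBlocks_le _ _ _ _
    (isUnit_iff_ne_zero.mpr hdet) (hrank _ hmem)
  simp only [Matrix.smul_mul, Matrix.mul_smul, smul_smul] at hschur
  have hZ : Z = t • (U * (1 + t • x)⁻¹ * W) := by
    apply smul_right_injective _ ht
    simp only [hschur, smul_smul]
  rw [hZ, Matrix.inv_def, Ring.inverse_eq_inv']
  simp only [Matrix.mul_smul, Matrix.smul_mul, smul_smul]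
  congr 1
  field_simp

theorem det_smul_map_C_eq_X_smul_of_mem [Infinite K] :
    (1 + (X : K[X]) • x.map C).det • Z.map C =
      (X : K[X]) • (U.map C * (1 + (X : K[X]) • x.map C).adjugate * W.map C) := by
  set N := 1 + (X : K[X]) • x.map C
  have hN0 : N.det.eval 0 = 1 := by simpa using eval_det_add_X_smul (1 : Matrix m m K[X]) x
  have hfin : {t : K | t = 0 ∨ N.det.IsRoot t}.Finite :=
    (Set.finite_singleton 0).union (finite_setOfPred_isRoot fun h => by simp [h] at hN0)
  refine Matrix.ext fun i j => ?_
  refine eq_of_infinite_eval_eq _ _ (hfin.infinite_compl.mono fun t ht => ?_)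
  simp only [Set.mem_compl_iff, Set.mem_ofPred_eq, not_or, IsRoot.def] at ht
  have hdet : (1 + t • x).det = N.det.eval t := by
    rw [← evalRingHom_mapMatrix_one_add_X_smul, ← RingHom.map_det]; rfl
  have hadj : (1 + t • x).adjugate = (evalRingHom t).mapMatrix N.adjugate := by
    rw [← evalRingHom_mapMatrix_one_add_X_smul, RingHom.map_adjugate]
  have := congrFun (congrFun (det_smul_eq_smul_mul_adjugate_mul_of_mem E hrank hX1 hX ht.1
    (hdet ▸ ht.2)) i) j
  simpa [hdet, hadj, Matrix.mul_apply, eval_finsetSum] using this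

end BoundedRankSubspace

/-- Atkinson normal form, necessity (Lemma 5.1 of the paper).  If every matrix in a
linear space `E` of `(r+p) × (r+q)` matrices has rank at most `r`, and `E` contains
the matrix whose upper-left `r×r` block is the identity and whose other blocks
vanish, then every `X ∈ E`, written in block form `[[x, W], [U, Z]]`, satisfies
`Z = 0` and `U·x^k·W = 0` for all `k ≥ 0`. -/
theorem stmt8 (r p q : ℕ)
    (E : Submodule ℂ (Matrix (Fin r ⊕ Fin p) (Fin r ⊕ Fin q) ℂ))
    (hrank : ∀ X ∈ E, X.rank ≤ r)
    (hX1 : Matrix.fromBlocks (1 : Matrix (Fin r) (Fin r) ℂ) 0 0 0 ∈ E) :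
    ∀ X ∈ E, ∀ (x : Matrix (Fin r) (Fin r) ℂ) (W : Matrix (Fin r) (Fin q) ℂ)
      (U : Matrix (Fin p) (Fin r) ℂ) (Z : Matrix (Fin p) (Fin q) ℂ),
      X = Matrix.fromBlocks x W U Z →
      Z = 0 ∧ ∀ k : ℕ, U * x ^ k * W = 0 := by
  rintro X hX x W U Z rfl
  have hrank' : ∀ X ∈ E, X.rank ≤ Fintype.card (Fin r) := by simpa using hrank
  exact eq_zero_and_mul_pow_mul_eq_zero_of_det_smul_map_C_eq_X_smul
    (det_smul_map_C_eq_X_smul_of_mem E hrank' hX1 hX)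
end

section
/- (Atkinson normal form, sufficiency.) Let X ∈ Matrix(b,c,ℂ) be a block matrix X = [[x, W],[U, 0]] with respect to the blocking (r, b−r) × (r, c−r), where x is r×r, and suppose U·x^k·W = 0 for all k with 0 ≤ k ≤ r−1. Then rank(X) ≤ r. -/
open Matrix

/-!
By Cayley–Hamilton, `U * x ^ k * W = 0` holds for every `k`. Hence the unobservable subspace
`S = {v | ∀ k, U * x ^ k * v = 0}` is `x`-invariant, killed by `U`, and contains the columns of
`W`. The columns of `X = [[x, W], [U, 0]]` then lie in `ι S + G(ℂʳ)`, where `ι v = (v, 0)` and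
`G v = (x v, U v)`. Since `G` maps `S` into `ι S`, only a complement of `S` contributes new
directions, so this space has dimension at most `dim S + (r - dim S) = r`.
-/

theorem LinearMap.finrank_map_sup_range_le_of_map_le {K V W : Type*} [DivisionRing K]
    [AddCommGroup V] [Module K V] [FiniteDimensional K V] [AddCommGroup W] [Module K W]
    (j g : V →ₗ[K] W) {S : Submodule K V} (hS : S.map g ≤ S.map j) :
    Module.finrank K ↥(S.map j ⊔ LinearMap.range g) ≤ Module.finrank K V := by
  obtain ⟨C, hC⟩ := Submodule.exists_isCompl S
  have hle : S.map j ⊔ LinearMap.range g ≤ S.map j ⊔ C.map g := by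
    rw [LinearMap.range_eq_map, ← hC.sup_eq_top, Submodule.map_sup, ← sup_assoc,
      sup_eq_left.mpr hS]
  calc Module.finrank K ↥(S.map j ⊔ LinearMap.range g)
      ≤ Module.finrank K ↥(S.map j ⊔ C.map g) := Submodule.finrank_mono hle
    _ ≤ Module.finrank K ↥(S.map j) + Module.finrank K ↥(C.map g) :=
      Submodule.finrank_add_le_finrank_add_finrank _ _
    _ ≤ Module.finrank K S + Module.finrank K C :=
      add_le_add (Submodule.finrank_map_le _ _) (Submodule.finrank_map_le _ _)
    _ = Module.finrank K V := Submodule.finrank_add_eq_of_isCompl hC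

namespace Matrix

variable {R K : Type*} {m n o : Type*} [Fintype n] [DecidableEq n]

theorem mul_pow_mul_eq_zero_of_forall_lt [CommRing R] [Nontrivial R]
    (A : Matrix m n R) (x : Matrix n n R) (B : Matrix n o R)
    (h : ∀ k < Fintype.card n, A * x ^ k * B = 0) (k : ℕ) : A * x ^ k * B = 0 := by
  set p := Polynomial.X ^ k %ₘ x.charpoly
  have hp : ∀ i, Fintype.card n ≤ i → p.coeff i = 0 := fun i hi =>
    Polynomial.coeff_eq_zero_of_degree_lt <|
      (Polynomial.degree_modByMonic_lt _ x.charpoly_monic).trans_le <| by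
        rw [charpoly_degree_eq_dim]; exact_mod_cast hi
  rw [pow_eq_aeval_mod_charpoly, Polynomial.aeval_eq_sum_range, Matrix.mul_sum, Matrix.sum_mul]
  refine Finset.sum_eq_zero fun i _ => ?_
  rw [Matrix.mul_smul, Matrix.smul_mul]
  rcases lt_or_ge i (Fintype.card n) with hi | hi
  · rw [h i hi, smul_zero]
  · rw [hp i hi, zero_smul]

variable [Field K]

theorem rank_fromBlocks_zero₂₂_le [Fintype m] [Fintype o] (x : Matrix n n K) (W : Matrix n o K) (U : Matrix m n K)
    (S : Submodule K (n → K)) (hxS : ∀ v ∈ S, x *ᵥ v ∈ S) (hWS : ∀ u, W *ᵥ u ∈ S)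
    (hUS : ∀ v ∈ S, U *ᵥ v = 0) :
    (fromBlocks x W U 0).rank ≤ Fintype.card n := by
  set ι := (fromRows (1 : Matrix n n K) (0 : Matrix m n K)).mulVecLin
  set G := (fromRows x U).mulVecLin
  have hGS : S.map G ≤ S.map ι := by
    rintro _ ⟨v, hv, rfl⟩
    refine ⟨x *ᵥ v, hxS v hv, ?_⟩
    funext i
    cases i <;> simp [ι, G, fromRows_mulVec, hUS v hv]
  have hrange : LinearMap.range (fromBlocks x W U 0).mulVecLin ≤ S.map ι ⊔ LinearMap.range G := by
    rintro _ ⟨u, rfl⟩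
    have hu : (fromBlocks x W U 0).mulVecLin u = ι (W *ᵥ (u ∘ Sum.inr)) + G (u ∘ Sum.inl) := by
      funext i
      cases i <;> simp [ι, G, fromBlocks_mulVec, fromRows_mulVec, add_comm]
    rw [hu]
    exact add_mem (Submodule.mem_sup_left ⟨_, hWS _, rfl⟩)
      (Submodule.mem_sup_right ⟨_, rfl⟩)
  calc (fromBlocks x W U 0).rank
      ≤ Module.finrank K ↥(S.map ι ⊔ LinearMap.range G) := Submodule.finrank_mono hrange
    _ ≤ Module.finrank K (n → K) := LinearMap.finrank_map_sup_range_le_of_map_le ι G hGS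
    _ = Fintype.card n := Module.finrank_fintype_fun_eq_card K

/-- The largest `x`-invariant subspace killed by `U`. -/
def unobservableSubspace (U : Matrix m n K) (x : Matrix n n K) : Submodule K (n → K) :=
  ⨅ k : ℕ, LinearMap.ker (U * x ^ k).mulVecLin

theorem mem_unobservableSubspace {U : Matrix m n K} {x : Matrix n n K} {v : n → K} :
    v ∈ U.unobservableSubspace x ↔ ∀ k : ℕ, (U * x ^ k) *ᵥ v = 0 := by
  simp [unobservableSubspace, Submodule.mem_iInf]

theorem rank_fromBlocks_zero₂₂_le_of_forall_mul_pow_mul_eq_zero [Fintype m] [Fintype o]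
    (x : Matrix n n K) (W : Matrix n o K) (U : Matrix m n K) (h : ∀ k : ℕ, U * x ^ k * W = 0) :
    (fromBlocks x W U 0).rank ≤ Fintype.card n := by
  refine rank_fromBlocks_zero₂₂_le x W U (U.unobservableSubspace x) (fun v hv => ?_)
    (fun u => ?_) (fun v hv => ?_) <;> rw [mem_unobservableSubspace] at *
  · intro k
    rw [mulVec_mulVec, Matrix.mul_assoc, ← pow_succ, hv]
  · intro k
    rw [mulVec_mulVec, h, zero_mulVec]
  · simpa using hv 0

end Matrix

/-- Atkinson normal form, sufficiency (Proposition 5.2 of the paper).  If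
`X = [[x, W], [U, 0]]` in block form with `x` of size `r×r`, and `U·x^k·W = 0`
for all `0 ≤ k ≤ r−1`, then `rank(X) ≤ r`. -/
theorem stmt9 (r p q : ℕ)
    (x : Matrix (Fin r) (Fin r) ℂ) (W : Matrix (Fin r) (Fin q) ℂ)
    (U : Matrix (Fin p) (Fin r) ℂ)
    (h : ∀ k : ℕ, k ≤ r - 1 → U * x ^ k * W = 0) :
    (Matrix.fromBlocks x W U 0).rank ≤ r := by
  have hall := mul_pow_mul_eq_zero_of_forall_lt U x W fun k hk =>
    h k (by rw [Fintype.card_fin] at hk; omega)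
  simpa using rank_fromBlocks_zero₂₂_le_of_forall_mul_pow_mul_eq_zero x W U hall
end

section
/- Let b, c, N be positive integers with c ≥ b, set r = b−1, and let x : ℂ^N → Matrix(r,r,ℂ), U : ℂ^N → Matrix(1,r,ℂ), W : ℂ^N → Matrix(r,c−r,ℂ) be linear (matrices of linear forms) such that U(a)·x(a)^k·W(a) = 0 for all a ∈ ℂ^N and all k ≥ 0. Suppose W(a) is nonzero only in its first row for all a, and W is not identically zero. Then for every a ∈ ℂ^N, the matrix obtained from the b×c block matrix M(a) = [[x(a), W(a)],[U(a), 0]] by deleting its first row has rank at most r−1 = b−2. In particular the space {M(a) : a ∈ ℂ^N} is imprimitive. -/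
/-!
Since `W(a)` lives in row `0`, `U xᵏ W = 0` says `(U xᵏ)₀₀ · W₀ⱼ = 0`. For some `j`,
`a ↦ W(a)₀ⱼ` is a nonzero linear form, whose nonvanishing locus is dense, so continuity gives
`(U(a) x(a)ᵏ)₀₀ = 0` for all `a`. Then `e₀` lies in the largest `x(a)`-invariant subspace of
`ker U(a)`, and a dimension count there gives `v ≠ 0` with `U(a) v = 0` and `x(a) v ∈ ℂ e₀`.
Once row `0` is deleted the `W`-columns vanish and `v` is in the kernel of the remaining
columns, so the rank is at most `b - 2`; and `M(a)ᵀ` maps the hyperplane `{v₀ = 0}` into the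
row space of that matrix.
-/

open Matrix Module

theorem LinearMap.exists_ne_zero_apply_mem {K V : Type*} [DivisionRing K] [AddCommGroup V]
    [Module K V] [FiniteDimensional K V] (f : V →ₗ[K] V) {E : Submodule K V} (hE : E ≠ ⊥) :
    ∃ v ≠ 0, f v ∈ E := by
  have hlt : finrank K (V ⧸ E) < finrank K V := by
    have := E.finrank_quotient_add_finrank
    have := Submodule.one_le_finrank_iff.mpr hE
    omega
  obtain ⟨v, hv, hv0⟩ :=
    (Submodule.ne_bot_iff _).mp (ker_ne_bot_of_finrank_lt (f := E.mkQ ∘ₗ f) hlt)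
  exact ⟨v, hv0, by simpa [Submodule.Quotient.mk_eq_zero] using hv⟩


theorem Module.End.exists_ne_zero_map_eq_zero_apply_mem_span {K V V' : Type*} [Field K]
    [AddCommGroup V] [Module K V] [FiniteDimensional K V] [AddCommGroup V'] [Module K V']
    (f : Module.End K V) (u : V →ₗ[K] V') {e : V} (he : e ≠ 0)
    (h : ∀ k : ℕ, u ((f ^ k) e) = 0) :
    ∃ v ≠ 0, u v = 0 ∧ f v ∈ K ∙ e := by
  let P : Submodule K V := ⨅ k : ℕ, LinearMap.ker (u ∘ₗ f ^ k)
  have hP : ∀ w ∈ P, f w ∈ P := by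
    intro w hw
    simp only [P, Submodule.mem_iInf, LinearMap.mem_ker, LinearMap.comp_apply] at hw ⊢
    intro k
    simpa [pow_succ, Module.End.mul_apply] using hw (k + 1)
  have heP : e ∈ P := by simpa [P] using h
  obtain ⟨v, hv0, hv⟩ := (f.restrict hP).exists_ne_zero_apply_mem
    (E := K ∙ ⟨e, heP⟩) (by simpa using he)
  obtain ⟨a, ha⟩ := Submodule.mem_span_singleton.mp hv
  refine ⟨v, by simpa using hv0, by simpa using (Submodule.mem_iInf _).mp v.2 0,
    Submodule.mem_span_singleton.mpr ⟨a, ?_⟩⟩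
  simpa using congrArg Subtype.val ha


theorem LinearMap.finrank_ker_proj_add_one {K ι : Type*} [DivisionRing K] [Fintype ι] (i : ι) :
    finrank K (LinearMap.ker (LinearMap.proj i : (ι → K) →ₗ[K] K)) + 1 = Fintype.card ι := by
  classical
  have hproj : (LinearMap.proj i : (ι → K) →ₗ[K] K) ≠ 0 :=
    fun h => by simpa using LinearMap.congr_fun h (Pi.single i 1)
  simpa using Module.Dual.finrank_ker_add_one_of_ne_zero hproj


theorem Submodule.dense_compl {𝕜 E : Type*} [NontriviallyNormedField 𝕜] [AddCommGroup E]
    [TopologicalSpace E] [ContinuousAdd E] [Module 𝕜 E] [ContinuousSMul 𝕜 E]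
    {s : Submodule 𝕜 E} (hs : s ≠ ⊤) : Dense (s : Set E)ᶜ :=
  interior_eq_empty_iff_dense_compl.mp <| Set.not_nonempty_iff_eq_empty.mp fun h =>
    hs (s.eq_top_of_nonempty_interior' h)


theorem Continuous.eq_zero_of_forall_linearMap_ne_zero {𝕜 E Y : Type*}
    [NontriviallyNormedField 𝕜] [AddCommGroup E] [TopologicalSpace E] [ContinuousAdd E]
    [Module 𝕜 E] [ContinuousSMul 𝕜 E] [TopologicalSpace Y] [T2Space Y] [Zero Y] {f : E → Y}
    (hf : Continuous f) {φ : E →ₗ[𝕜] 𝕜} (hφ : φ ≠ 0) (h : ∀ a, φ a ≠ 0 → f a = 0) : f = 0 :=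
  Continuous.ext_on (Submodule.dense_compl (LinearMap.ker_eq_top.not.mpr hφ)) hf
    continuous_const h

namespace Matrix

theorem mul_apply_of_forall_ne_eq_zero {α l m n : Type*} [Fintype m] [DecidableEq m]
    [NonUnitalNonAssocSemiring α] (A : Matrix l m α) {B : Matrix m n α} {i₀ : m} {j : n}
    (hB : ∀ i ≠ i₀, B i j = 0) (k : l) : (A * B) k j = A k i₀ * B i₀ j :=
  Finset.sum_eq_single i₀ (fun i _ hi => by simp [hB i hi]) (by simp)


theorem mul_pow_apply_eq_zero_of_mul_pow_mul_eq_zero {𝕜 E n m p : Type*}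
    [NontriviallyNormedField 𝕜] [CompleteSpace 𝕜] [NormedAddCommGroup E] [NormedSpace 𝕜 E]
    [FiniteDimensional 𝕜 E] [Fintype n] [DecidableEq n] {x : E →ₗ[𝕜] Matrix n n 𝕜}
    {U : E →ₗ[𝕜] Matrix m n 𝕜} {W : E →ₗ[𝕜] Matrix n p 𝕜}
    (hUxW : ∀ a k, U a * x a ^ k * W a = 0) {i₀ : n} (hW : ∀ a j, ∀ i ≠ i₀, W a i j = 0)
    (hW0 : W ≠ 0) (a : E) (k : ℕ) (l : m) : (U a * x a ^ k) l i₀ = 0 := by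
  obtain ⟨j₀, hj₀⟩ : ∃ j₀, entryLinearMap 𝕜 𝕜 i₀ j₀ ∘ₗ W ≠ 0 := by
    by_contra! h
    refine hW0 (LinearMap.ext fun a => Matrix.ext fun i j => ?_)
    obtain rfl | hi := eq_or_ne i i₀
    · exact LinearMap.congr_fun (h j) a
    · exact hW a j i hi
  have hcont : Continuous fun a => (U a * x a ^ k) l i₀ :=
    (U.continuous_of_finiteDimensional.matrix_mul
      (x.continuous_of_finiteDimensional.pow k)).matrix_elem l i₀
  refine congrFun (hcont.eq_zero_of_forall_linearMap_ne_zero hj₀ fun a' ha' => ?_) a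
  have := congrFun (congrFun (hUxW a' k) l) j₀
  rw [mul_apply_of_forall_ne_eq_zero _ (hW a' j₀)] at this
  exact (mul_eq_zero.mp this).resolve_right ha'


variable {K m n : Type*} [Field K] [Fintype n]

theorem exists_ne_zero_mulVec_eq_zero_of_mul_pow_col_eq_zero [DecidableEq n]
    (x : Matrix n n K) (U : Matrix m n K) (j : n) (h : ∀ (k : ℕ) i, (U * x ^ k) i j = 0) :
    ∃ v ≠ 0, U *ᵥ v = 0 ∧ ∀ i ≠ j, (x *ᵥ v) i = 0 := by
  obtain ⟨v, hv0, hUv, hxv⟩ := Module.End.exists_ne_zero_map_eq_zero_apply_mem_span x.toLin'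
    U.toLin' (e := Pi.single j 1) (by simp) fun k => by
      ext i
      rw [← toLin'_pow, toLin'_apply, toLin'_apply, mulVec_mulVec, mulVec_single_one]
      exact h k i
  obtain ⟨c, hc⟩ := Submodule.mem_span_singleton.mp hxv
  refine ⟨v, hv0, hUv, fun i hi => ?_⟩
  simp [← toLin'_apply, ← hc, hi]

theorem rank_lt_card_width_of_mulVec_eq_zero {A : Matrix m n K} {v : n → K} (hv : v ≠ 0)
    (hAv : A *ᵥ v = 0) : A.rank < Fintype.card n := by
  have hker : 0 < finrank K (LinearMap.ker A.mulVecLin) :=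
    Submodule.one_le_finrank_iff.mpr ((Submodule.ne_bot_iff _).mpr ⟨v, hAv, hv⟩)
  have := A.mulVecLin.finrank_range_add_finrank_ker
  rw [finrank_fintype_fun_eq_card] at this
  rw [rank]
  omega

theorem rank_fromBlocks_zero₂₂_submatrix_lt {p o m' o' : Type*} [Fintype p]
    (A : Matrix m n K) (B : Matrix m p K) (C : Matrix o n K) (f : m' → m) (g : o' → o)
    (hB : ∀ i j, B (f i) j = 0) {v : n → K} (hv : v ≠ 0) (hAv : ∀ i, (A *ᵥ v) (f i) = 0)
    (hCv : ∀ i, (C *ᵥ v) (g i) = 0) :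
    ((fromBlocks A B C 0).submatrix (Sum.map f g) id).rank < Fintype.card n := by
  classical
  set S₁ := (fromBlocks A B C 0).submatrix (Sum.map f g) Sum.inl
  have hS : (fromBlocks A B C 0).submatrix (Sum.map f g) id =
      S₁ * fromCols (1 : Matrix n n K) (0 : Matrix n p K) := by
    rw [mul_fromCols, Matrix.mul_one, Matrix.mul_zero]
    ext (i | i) (j | j) <;> simp [S₁, hB]
  have hS₁v : S₁ *ᵥ v = 0 := by
    ext (i | i)
    · exact hAv i
    · exact hCv i
  rw [hS]
  exact (rank_mul_le_left _ _).trans_lt (rank_lt_card_width_of_mulVec_eq_zero hv hS₁v)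

theorem finrank_map_transpose_mulVecLin_le_rank_submatrix {m' : Type*} [Fintype m]
    [Fintype m'] (M : Matrix m n K) {e : m' → m} (he : Function.Injective e)
    {H : Submodule K (m → K)} (hH : ∀ v ∈ H, ∀ i ∉ Set.range e, v i = 0) :
    finrank K (H.map Mᵀ.mulVecLin) ≤ (M.submatrix e id).rank := by
  have hle : H.map Mᵀ.mulVecLin ≤ LinearMap.range (M.submatrix e id)ᵀ.mulVecLin := by
    rintro _ ⟨v, hv, rfl⟩
    refine ⟨v ∘ e, funext fun j => ?_⟩
    simp only [mulVecLin_apply, mulVec_transpose, vecMul, dotProduct]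
    exact Fintype.sum_of_injective e he _ _ (fun i hi => by simp [hH v hv i hi]) fun i => rfl
  rw [← rank_transpose]
  exact Submodule.finrank_mono hle

theorem rank_fromBlocks_submatrix_val_ne_zero_lt {r : ℕ} [NeZero r] {p : Type*} [Fintype p]
    (x : Matrix (Fin r) (Fin r) K) (U : Matrix m (Fin r) K) (W : Matrix (Fin r) p K)
    (hUx : ∀ (k : ℕ) l, (U * x ^ k) l 0 = 0) (hW : ∀ (i : Fin r) j, (i : ℕ) ≠ 0 → W i j = 0) :
    ((fromBlocks x W U 0).submatrix
      (Sum.map (Subtype.val : {i : Fin r // (i : ℕ) ≠ 0} → Fin r) id) id).rank < r := by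
  obtain ⟨v, hv0, hUv, hxv⟩ := exists_ne_zero_mulVec_eq_zero_of_mul_pow_col_eq_zero x U 0 hUx
  simpa using rank_fromBlocks_zero₂₂_submatrix_lt x W U Subtype.val id
    (fun i j => hW i j i.2) hv0 (fun i => hxv i.1 (Fin.val_ne_zero_iff.mp i.2)) (congrFun hUv)

theorem finrank_map_ker_proj_le_rank_submatrix {r : ℕ} [NeZero r] {o : Type*} [Fintype o]
    (M : Matrix (Fin r ⊕ o) n K) :
    finrank K ((LinearMap.ker (LinearMap.proj (Sum.inl 0))).map Mᵀ.mulVecLin) ≤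
      (M.submatrix (Sum.map (Subtype.val : {i : Fin r // (i : ℕ) ≠ 0} → Fin r) id) id).rank := by
  refine finrank_map_transpose_mulVecLin_le_rank_submatrix M
    (Sum.map_injective.mpr ⟨Subtype.val_injective, Function.injective_id⟩) ?_
  rintro v hv (i | i) hi
  · by_cases hi0 : (i : ℕ) = 0
    · obtain rfl : i = 0 := Fin.ext hi0
      simpa using hv
    · exact (hi ⟨Sum.inl ⟨i, hi0⟩, rfl⟩).elim
  · exact (hi ⟨Sum.inr i, rfl⟩).elim

end Matrix

theorem stmt11_general (b c N : ℕ)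
    (x : (Fin N → ℂ) →ₗ[ℂ] Matrix (Fin (b - 1)) (Fin (b - 1)) ℂ)
    (U : (Fin N → ℂ) →ₗ[ℂ] Matrix (Fin 1) (Fin (b - 1)) ℂ)
    (W : (Fin N → ℂ) →ₗ[ℂ] Matrix (Fin (b - 1)) (Fin (c - (b - 1))) ℂ)
    (hUxW : ∀ (a : Fin N → ℂ) (k : ℕ), U a * (x a) ^ k * W a = 0)
    (hWrow : ∀ (a : Fin N → ℂ) (i : Fin (b - 1)) (j : Fin (c - (b - 1))),
      (i : ℕ) ≠ 0 → W a i j = 0)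
    (hWne : W ≠ 0) :
    (∀ a : Fin N → ℂ,
      ((Matrix.fromBlocks (x a) (W a) (U a) 0).submatrix
        (Sum.map (Subtype.val : {i : Fin (b - 1) // (i : ℕ) ≠ 0} → Fin (b - 1))
          (id : Fin 1 → Fin 1)) id).rank ≤ b - 2) ∧
    (∃ H' : Submodule ℂ (Fin (b - 1) ⊕ Fin 1 → ℂ),
      Module.finrank ℂ H' = b - 1 ∧
      ∀ a : Fin N → ℂ,
        Module.finrank ℂ
          (H'.map ((Matrix.fromBlocks (x a) (W a) (U a) 0).transpose.mulVecLin)) ≤ b - 2) := by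
  have : NeZero (b - 1) :=
    ⟨fun hr => hWne (LinearMap.ext fun a => Matrix.ext fun i => (Fin.cast hr i).elim0)⟩
  have hUx := mul_pow_apply_eq_zero_of_mul_pow_mul_eq_zero hUxW (i₀ := 0)
    (fun a j i hi => hWrow a i j (Fin.val_ne_zero_iff.mpr hi)) hWne
  have hrank (a : Fin N → ℂ) : _ ≤ b - 2 :=
    Nat.le_pred_of_lt (rank_fromBlocks_submatrix_val_ne_zero_lt (x a) (U a) (W a) (hUx a) (hWrow a))
  refine ⟨hrank, _, ?_, fun a => (finrank_map_ker_proj_le_rank_submatrix _).trans (hrank a)⟩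
  simpa using LinearMap.finrank_ker_proj_add_one (K := ℂ) (Sum.inl 0 : Fin (b - 1) ⊕ Fin 1)

/-- Proposition 5.5 of the paper (the `d_W = 1` case, `W` supported in one row).
Let `r = b−1` and let `x, U, W` be matrices of linear forms on `ℂ^N` (of sizes
`r×r`, `1×r`, `r×(c−r)`) with `U(a)·x(a)^k·W(a) = 0` for all `a` and `k`.
If `W(a)` is nonzero only in its first row for every `a`, and `W` is not
identically zero, then deleting the first row of the block matrix
`M(a) = [[x(a), W(a)], [U(a), 0]]` yields a matrix of rank at most `b−2`, for
every `a`.  In particular the space `{M(a) : a ∈ ℂ^N}` is imprimitive. -/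
theorem stmt11 (b c N : ℕ) (hb : 0 < b) (hc : 0 < c) (hN : 0 < N) (hbc : b ≤ c)
    (x : (Fin N → ℂ) →ₗ[ℂ] Matrix (Fin (b - 1)) (Fin (b - 1)) ℂ)
    (U : (Fin N → ℂ) →ₗ[ℂ] Matrix (Fin 1) (Fin (b - 1)) ℂ)
    (W : (Fin N → ℂ) →ₗ[ℂ] Matrix (Fin (b - 1)) (Fin (c - (b - 1))) ℂ)
    (hUxW : ∀ (a : Fin N → ℂ) (k : ℕ), U a * (x a) ^ k * W a = 0)
    (hWrow : ∀ (a : Fin N → ℂ) (i : Fin (b - 1)) (j : Fin (c - (b - 1))),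
      (i : ℕ) ≠ 0 → W a i j = 0)
    (hWne : W ≠ 0) :
    (∀ a : Fin N → ℂ,
      ((Matrix.fromBlocks (x a) (W a) (U a) 0).submatrix
        (Sum.map (Subtype.val : {i : Fin (b - 1) // (i : ℕ) ≠ 0} → Fin (b - 1))
          (id : Fin 1 → Fin 1)) id).rank ≤ b - 2) ∧
    (∃ H' : Submodule ℂ (Fin (b - 1) ⊕ Fin 1 → ℂ),
      Module.finrank ℂ H' = b - 1 ∧
      ∀ a : Fin N → ℂ,
        Module.finrank ℂ
          (H'.map ((Matrix.fromBlocks (x a) (W a) (U a) 0).transpose.mulVecLin)) ≤ b - 2) :=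
  stmt11_general b c N x U W hUxW hWrow hWne
end

section
/- Let a ≤ b and let T ∈ ℂ^a ⊗ ℂ^b ⊗ ℂ^b be a concise tensor such that the space T(A*) = {T(α) : α ∈ (ℂ^a)*} ⊆ Hom((ℂ^b)*, ℂ^b) is of bounded rank b−1 (corank one) and primitive. Then T does not have minimal border rank: T does not lie in the closure of the set of tensors of rank at most b in ℂ^a ⊗ ℂ^b ⊗ ℂ^b. -/
open Matrix

open Module

/-!
On tensors of rank at most `b`, whose slices are `V D(α) W` with `D(α)` diagonal, the
slices satisfy `T(α) adj(T(α')) T(α'') = T(α'') adj(T(α')) T(α)`; this closed condition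
persists on the border. Choose `α₀` with `T(α₀)` of corank one, so `adj T(α₀) = x yᵀ` with
`x`, `y` nonzero right and left kernel vectors. The identity makes `T(α) x ⊗ yᵀ T(β)`
symmetric in `α, β`, so all covectors `yᵀ T(α)` are multiples of one nonzero
`c = yᵀ T(α₁)`, and `T(α) x = 0` whenever `yᵀ T(α) = 0`. Bounded rank,
`det (T(α₀) + t T(α₁)) ≡ 0`, gives `c x = 0` to first order in `t`. Hence every slice drops
rank on the hyperplane `ker c`: it maps `ker c` into `ker yᵀ`, and either its image is not
contained in `ker yᵀ`, or it kills `x ∈ ker c`. This contradicts primitivity.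
-/

namespace LinearMap

variable {K V W : Type*} [Field K] [AddCommGroup V] [Module K V] [AddCommGroup W] [Module K W]
  [FiniteDimensional K V]

theorem finrank_map_lt_of_mem_ker (f : V →ₗ[K] W) {H : Submodule K V} {v : V} (hvH : v ∈ H)
    (hv : v ≠ 0) (hfv : f v = 0) : finrank K (H.map f) < finrank K H := by
  have hker : ker (f.domRestrict H) ≠ ⊥ :=
    (Submodule.ne_bot_iff _).mpr ⟨⟨v, hvH⟩, hfv, by simpa using hv⟩
  have := Submodule.one_le_finrank_iff.mpr hker
  have := finrank_range_add_finrank_ker (f.domRestrict H)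
  rw [range_domRestrict] at this
  omega

theorem finrank_map_lt_finrank_range (f : V →ₗ[K] W) {H : Submodule K V} {U : Submodule K W}
    (hH : H.map f ≤ U) (hf : ¬ range f ≤ U) : finrank K (H.map f) < finrank K (range f) :=
  (Submodule.finrank_mono (le_inf map_le_range hH)).trans_lt
    (Submodule.finrank_lt_finrank_of_lt (inf_lt_left.mpr hf))

end LinearMap

namespace Matrix

theorem exists_smul_eq_of_vecMulVec_eq {K m n : Type*} [Field K] {u u' : m → K} {v v' : n → K}
    (h : vecMulVec u v = vecMulVec u' v') (hu : u ≠ 0) : ∃ μ : K, v = μ • v' := by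
  obtain ⟨i, hi⟩ := Function.ne_iff.mp hu
  refine ⟨u' i / u i, funext fun j => ?_⟩
  have := congrFun (congrFun h i) j
  simp only [vecMulVec_apply] at this
  rw [Pi.smul_apply, smul_eq_mul, div_mul_eq_mul_div, eq_div_iff hi, mul_comm, this]

variable {K : Type*} [Field K] {n : Type*} [Fintype n]

theorem det_eq_zero_of_rank_lt [DecidableEq n] {A : Matrix n n K}
    (hA : A.rank < Fintype.card n) : A.det = 0 := by
  by_contra h
  exact hA.ne (rank_of_det_ne_zero h)

theorem finrank_ker_dotProductEquiv [DecidableEq n] {c : n → K} (hc : c ≠ 0) :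
    finrank K (LinearMap.ker (dotProductEquiv K n c)) + 1 = Fintype.card n := by
  rw [Module.Dual.finrank_ker_add_one_of_ne_zero ((dotProductEquiv K n).map_ne_zero_iff.mpr hc),
    finrank_fintype_fun_eq_card]

theorem updateCol_mulVec [DecidableEq n] {R m : Type*} [CommRing R] (A : Matrix m n R) (j : n)
    (u : m → R) (z : n → R) :
    A.updateCol j u *ᵥ z = A *ᵥ Function.update z j 0 + z j • u := by
  ext i
  have hsplit : ∀ k, A.updateCol j u i k * z k
      = A i k * Function.update z j 0 k + if k = j then z j * u i else 0 := by
    intro k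
    by_cases hk : k = j
    · subst hk; simp [mul_comm]
    · simp [hk]
  simp only [mulVec, dotProduct, hsplit, Finset.sum_add_distrib, Finset.sum_ite_eq',
    Finset.mem_univ, if_true, Pi.add_apply, Pi.smul_apply, smul_eq_mul]

theorem exists_ker_mulVecLin_eq_span_singleton {A : Matrix n n K}
    (hA : A.rank + 1 = Fintype.card n) :
    ∃ x ≠ 0, LinearMap.ker A.mulVecLin = K ∙ x := by
  have hrn := LinearMap.finrank_range_add_finrank_ker A.mulVecLin
  rw [Module.finrank_fintype_fun_eq_card, ← rank] at hrn
  obtain ⟨x, hxA, hx⟩ := Submodule.exists_mem_ne_zero_of_ne_bot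
    (Submodule.one_le_finrank_iff.mp (by omega) : LinearMap.ker A.mulVecLin ≠ ⊥)
  refine ⟨x, hx, (Submodule.eq_of_le_of_finrank_eq ?_ ?_).symm⟩
  · simpa [Submodule.span_le] using hxA
  · rw [finrank_span_singleton hx]; omega

theorem adjugate_ne_zero_of_rank_add_one_eq [DecidableEq n] {A : Matrix n n K}
    (hA : A.rank + 1 = Fintype.card n) : A.adjugate ≠ 0 := by
  -- `det (A.updateCol j u) = (adj A *ᵥ u) j`, and replacing a column `j` with `x j ≠ 0`
  -- (`x ∈ ker A`) by some `u ∉ range A` gives an invertible matrix.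
  intro hadj
  obtain ⟨x, hx, hker⟩ := exists_ker_mulVecLin_eq_span_singleton hA
  obtain ⟨j, hxj⟩ := Function.ne_iff.mp hx
  obtain ⟨u, hu⟩ : ∃ u, u ∉ LinearMap.range A.mulVecLin := by
    by_contra! h
    have := Submodule.finrank_mono (fun u _ => h u : (⊤ : Submodule K (n → K)) ≤ _)
    rw [finrank_top, Module.finrank_fintype_fun_eq_card, ← rank] at this
    omega
  obtain ⟨z, hz, hAz⟩ := exists_mulVec_eq_zero_iff.mpr
    (by rw [← cramer_apply, cramer_eq_adjugate_mulVec, hadj, zero_mulVec]; rfl :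
      (A.updateCol j u).det = 0)
  rw [updateCol_mulVec] at hAz
  have hzj : z j = 0 := by
    by_contra hzj
    refine hu ⟨-(z j)⁻¹ • Function.update z j 0, ?_⟩
    rw [mulVecLin_apply, mulVec_smul, eq_neg_of_add_eq_zero_left hAz]
    simp [smul_smul, hzj]
  rw [hzj, zero_smul, add_zero, Function.update_eq_self_iff.mpr hzj.symm] at hAz
  obtain ⟨c, rfl⟩ := Submodule.mem_span_singleton.mp (hker ▸ hAz : z ∈ K ∙ x)
  simp_all

theorem exists_adjugate_eq_vecMulVec [DecidableEq n] {A : Matrix n n K}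
    (hA : A.rank + 1 = Fintype.card n) :
    ∃ x y : n → K, x ≠ 0 ∧ y ≠ 0 ∧ A *ᵥ x = 0 ∧ A.adjugate = vecMulVec x y := by
  obtain ⟨x, hx, hker⟩ := exists_ker_mulVecLin_eq_span_singleton hA
  have hdet : A.det = 0 := det_eq_zero_of_rank_lt (by omega)
  have hcol : ∀ j, ∃ c : K, c • x = fun i => A.adjugate i j := by
    intro j
    rw [← Submodule.mem_span_singleton, ← hker, LinearMap.mem_ker, mulVecLin_apply]
    ext i
    have := congrFun (congrFun (mul_adjugate A) i) j
    rwa [hdet, zero_smul] at this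
  choose y hy using hcol
  have hadj : A.adjugate = vecMulVec x y := by
    ext i j
    rw [← congrFun (hy j) i, vecMulVec_apply, Pi.smul_apply, smul_eq_mul, mul_comm]
  refine ⟨x, y, hx, ?_, ?_, hadj⟩
  · rintro rfl
    exact adjugate_ne_zero_of_rank_add_one_eq hA (by simpa using hadj)
  · have : x ∈ LinearMap.ker A.mulVecLin := hker ▸ Submodule.mem_span_singleton_self x
    simpa using this

theorem finrank_map_mulVecLin_ker_dotProductEquiv_lt [DecidableEq n] {X : Matrix n n K}
    {x y c : n → K}
    (hc : c ≠ 0) (hX : X.rank + 1 ≤ Fintype.card n) (hx : x ≠ 0) (hcx : c ⬝ᵥ x = 0)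
    (hyX : ∃ μ : K, y ᵥ* X = μ • c) (hXx : y ᵥ* X = 0 → X *ᵥ x = 0) :
    finrank K ((LinearMap.ker (dotProductEquiv K n c)).map X.mulVecLin)
      < finrank K (LinearMap.ker (dotProductEquiv K n c)) := by
  set H := LinearMap.ker (dotProductEquiv K n c)
  have hH : finrank K H + 1 = Fintype.card n := finrank_ker_dotProductEquiv hc
  by_cases hyX0 : y ᵥ* X = 0
  · exact LinearMap.finrank_map_lt_of_mem_ker X.mulVecLin (by simpa [H] using hcx) hx
      (by simpa using hXx hyX0)
  obtain ⟨μ, hμ⟩ := hyX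
  have hmap : H.map X.mulVecLin ≤ LinearMap.ker (dotProductEquiv K n y) := by
    rintro _ ⟨h, hh : c ⬝ᵥ h = 0, rfl⟩
    rw [LinearMap.mem_ker, dotProductEquiv_apply_apply, mulVecLin_apply, dotProduct_mulVec, hμ,
      smul_dotProduct, hh, smul_zero]
  have hrange : ¬ LinearMap.range X.mulVecLin ≤ LinearMap.ker (dotProductEquiv K n y) := by
    intro hle
    refine hyX0 (funext fun k => ?_)
    have := hle ⟨Pi.single k 1, rfl⟩
    rwa [LinearMap.mem_ker, dotProductEquiv_apply_apply, mulVecLin_apply, dotProduct_mulVec,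
      dotProduct_single, mul_one] at this
  have := LinearMap.finrank_map_lt_finrank_range X.mulVecLin hmap hrange
  change _ < X.rank at this
  omega

theorem adjugate_mulVec_mulVec_eq_zero {𝕜 : Type*} [NontriviallyNormedField 𝕜] {n : Type*}
    [Fintype n] [DecidableEq n] {A B : Matrix n n 𝕜} {x : n → 𝕜} (hx : A *ᵥ x = 0)
    (hdet : ∀ t : 𝕜, (A + t • B).det = 0) : A.adjugate *ᵥ (B *ᵥ x) = 0 := by
  set f : 𝕜 → n → 𝕜 := fun t => (A + t • B).adjugate *ᵥ (B *ᵥ x)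
  have hf : Continuous f :=
    ((continuous_const.add (continuous_id.smul continuous_const)).matrix_adjugate).matrix_mulVec
      continuous_const
  have hf_ne : ∀ t ≠ 0, f t = 0 := by
    intro t ht
    have hsmul : t • f t = 0 := by
      calc t • f t = (A + t • B).adjugate *ᵥ ((A + t • B) *ᵥ x) := by
            simp [f, add_mulVec, hx, smul_mulVec, mulVec_smul]
        _ = 0 := by rw [mulVec_mulVec, adjugate_mul, hdet, zero_smul, zero_mulVec]
    exact (smul_eq_zero.mp hsmul).resolve_left ht
  have hclosed : IsClosed {t | f t = 0} := isClosed_eq hf continuous_const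
  have : closure {0}ᶜ ⊆ {t | f t = 0} := hclosed.closure_subset_iff.mpr hf_ne
  rw [(dense_compl_singleton (0 : 𝕜)).closure_eq] at this
  simpa [f] using this (Set.mem_univ 0)

theorem mul_diagonal_mul_adjugate_mul_comm {R n : Type*} [CommRing R] [Fintype n]
    [DecidableEq n] (V W : Matrix n n R) (d₁ d₂ d₃ : n → R) :
    V * diagonal d₁ * W * adjugate (V * diagonal d₂ * W) * (V * diagonal d₃ * W)
      = V * diagonal d₃ * W * adjugate (V * diagonal d₂ * W) * (V * diagonal d₁ * W) := by
  have hform : ∀ e f : n → R,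
      V * diagonal e * W * adjugate (V * diagonal d₂ * W) * (V * diagonal f * W)
        = (V.det * W.det) •
          (V * diagonal (fun i => e i * ((∏ j ∈ Finset.univ.erase i, d₂ j) * f i)) * W) := by
    intro e f
    rw [adjugate_mul_distrib, adjugate_mul_distrib, adjugate_diagonal]
    simp only [Matrix.mul_assoc]
    rw [← Matrix.mul_assoc W W.adjugate, mul_adjugate, ← Matrix.mul_assoc V.adjugate V,
      adjugate_mul]
    simp only [Matrix.smul_mul, Matrix.mul_smul, Matrix.one_mul, smul_smul, ← Matrix.mul_assoc,
      diagonal_mul_diagonal]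
  rw [hform, hform]
  congr 4
  ext i
  ring

end Matrix

theorem tensorSlice_eq_mul_diagonal_mul {a b c r : ℕ} (u : Fin r → Fin a → ℂ)
    (v : Fin r → Fin b → ℂ) (w : Fin r → Fin c → ℂ) (α : Fin a → ℂ) :
    tensorSlice (fun i j k => ∑ s, u s i * v s j * w s k) α
      = of (fun j s => v s j) * diagonal (fun s => ∑ i, α i * u s i) * of w := by
  ext j k
  simp only [tensorSlice, of_apply, mul_apply, diagonal_apply, mul_ite, mul_zero,
    Finset.sum_ite_eq', Finset.mem_univ, if_true, Finset.mul_sum, Finset.sum_mul]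
  rw [Finset.sum_comm]
  refine Finset.sum_congr rfl fun s _ => Finset.sum_congr rfl fun i _ => ?_
  ring

theorem continuous_tensorSlice {a b c : ℕ} (α : Fin a → ℂ) :
    Continuous fun S : Tensor3 a b c => tensorSlice S α :=
  continuous_pi fun j => continuous_pi fun k => by simp only [tensorSlice, of_apply]; fun_prop

theorem tensorSlice_mul_adjugate_mul_comm_of_mem_closure {a b : ℕ} {S : Tensor3 a b b}
    (hS : S ∈ closure (rankLE a b b b)) (α α' α'' : Fin a → ℂ) :
    tensorSlice S α * adjugate (tensorSlice S α') * tensorSlice S α''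
      = tensorSlice S α'' * adjugate (tensorSlice S α') * tensorSlice S α := by
  have h₁ := continuous_tensorSlice (b := b) (c := b) α
  have h₂ := (continuous_tensorSlice (b := b) (c := b) α').matrix_adjugate
  have h₃ := continuous_tensorSlice (b := b) (c := b) α''
  refine closure_minimal ?_ (isClosed_eq ((h₁.matrix_mul h₂).matrix_mul h₃)
    ((h₃.matrix_mul h₂).matrix_mul h₁)) hS
  rintro _ ⟨u, v, w, rfl⟩
  simp only [Set.mem_ofPred_eq, tensorSlice_eq_mul_diagonal_mul]
  exact mul_diagonal_mul_adjugate_mul_comm _ _ _ _ _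

theorem tensorSlice_add_smul {a b c : ℕ} (T : Tensor3 a b c) (α β : Fin a → ℂ) (t : ℂ) :
    tensorSlice T (α + t • β) = tensorSlice T α + t • tensorSlice T β := by
  ext j k
  simp only [tensorSlice, of_apply, Matrix.add_apply, Matrix.smul_apply, Pi.add_apply,
    Pi.smul_apply, smul_eq_mul, Finset.mul_sum, ← Finset.sum_add_distrib]
  exact Finset.sum_congr rfl fun i _ => by ring

theorem tensorSlice_single {a b c : ℕ} (T : Tensor3 a b c) (i : Fin a) :
    tensorSlice T (Pi.single i 1) = of (T i) := by
  ext j k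
  simp [tensorSlice, Pi.single_apply]

theorem eq_zero_of_forall_vecMul_tensorSlice_eq_zero {a b c : ℕ} {T : Tensor3 a b c}
    (hT : Function.Injective fun (β : Fin b → ℂ) (i : Fin a) (k : Fin c) =>
      ∑ j, β j * T i j k)
    {y : Fin b → ℂ} (h : ∀ α, y ᵥ* tensorSlice T α = 0) : y = 0 :=
  hT <| funext fun i => funext fun k => by
    simpa [tensorSlice_single, vecMul, dotProduct] using congrFun (h (Pi.single i 1)) k

theorem eq_zero_of_forall_tensorSlice_mulVec_eq_zero {a b c : ℕ} {T : Tensor3 a b c}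
    (hT : Function.Injective fun (γ : Fin c → ℂ) (i : Fin a) (j : Fin b) =>
      ∑ k, γ k * T i j k)
    {x : Fin c → ℂ} (h : ∀ α, tensorSlice T α *ᵥ x = 0) : x = 0 :=
  hT <| funext fun i => funext fun j => by
    simpa [tensorSlice_single, mulVec, dotProduct, mul_comm] using congrFun (h (Pi.single i 1)) j

theorem stmt12_general (a b : ℕ)
    (T : Tensor3 a b b)
    (hconciseB : Function.Injective fun (β : Fin b → ℂ) => fun (i : Fin a) (k : Fin b) => ∑ j, β j * T i j k)
    (hconciseC : Function.Injective fun (γ : Fin b → ℂ) => fun (i : Fin a) (j : Fin b) => ∑ k, γ k * T i j k)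
    (hbdd : ∀ α : Fin a → ℂ, (tensorSlice T α).rank ≤ b - 1)
    (hcorank1 : ∃ α : Fin a → ℂ, (tensorSlice T α).rank = b - 1)
    (hprimB : ¬ ∃ H : Submodule ℂ (Fin b → ℂ), Module.finrank ℂ H = b - 1 ∧
      ∀ α : Fin a → ℂ, Module.finrank ℂ (H.map (tensorSlice T α).mulVecLin) ≤ b - 2) :
    T ∉ closure (rankLE a b b b) := by
  intro hT
  rcases Nat.eq_zero_or_pos b with rfl | hb
  · exact hprimB ⟨⊥, by simp, fun α => by simp⟩
  obtain ⟨α₀, hα₀⟩ := hcorank1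
  obtain ⟨x, y, hx, hy, hα₀x, hadj⟩ :=
    exists_adjugate_eq_vecMulVec (A := tensorSlice T α₀) (by simp only [Fintype.card_fin]; omega)
  set c := fun α => y ᵥ* tensorSlice T α
  set d := fun α => tensorSlice T α *ᵥ x
  have hsym : ∀ α β, vecMulVec (d α) (c β) = vecMulVec (d β) (c α) := fun α β => by
    simpa only [hadj, mul_vecMulVec, vecMulVec_mul] using
      tensorSlice_mul_adjugate_mul_comm_of_mem_closure hT α α₀ β
  have hcx : ∀ α, c α ⬝ᵥ x = 0 := fun α => by
    have := adjugate_mulVec_mulVec_eq_zero (B := tensorSlice T α) hα₀x fun t => by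
      rw [← tensorSlice_add_smul]
      exact det_eq_zero_of_rank_lt (by simpa using (hbdd _).trans_lt (by omega))
    rw [hadj, vecMulVec_mulVec, smul_eq_zero] at this
    simpa [c, dotProduct_mulVec, hx] using this
  obtain ⟨α₁, hc₁⟩ : ∃ α₁, c α₁ ≠ 0 := by
    by_contra! h
    exact hy (eq_zero_of_forall_vecMul_tensorSlice_eq_zero hconciseB h)
  have hd₁ : d α₁ ≠ 0 := fun hd =>
    hx <| eq_zero_of_forall_tensorSlice_mulVec_eq_zero hconciseC fun β => by
      simpa [hd, hc₁] using hsym β α₁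
  have hH := finrank_ker_dotProductEquiv hc₁
  rw [Fintype.card_fin] at hH
  refine hprimB ⟨LinearMap.ker (dotProductEquiv ℂ (Fin b) (c α₁)), by omega, fun α => ?_⟩
  have := finrank_map_mulVecLin_ker_dotProductEquiv_lt hc₁
    (by have := hbdd α; simp only [Fintype.card_fin]; omega) hx (hcx α₁)
    (exists_smul_eq_of_vecMulVec_eq (hsym α₁ α) hd₁)
    (fun hc => by simpa [show c α = 0 from hc, hc₁] using hsym α α₁)
  omega

/-- Corollary 5.6 of the paper: a concise tensor `T ∈ ℂ^a ⊗ ℂ^b ⊗ ℂ^b` (with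
`a ≤ b`) whose space of slices `T(A^*)` is of bounded rank `b−1` (corank one) and
primitive cannot have minimal border rank: `T` is not in the closure of the set of
tensors of rank at most `b`. -/
theorem stmt12 (a b : ℕ) (hab : a ≤ b)
    (T : Tensor3 a b b)
    (hconciseA : Function.Injective fun (α : Fin a → ℂ) => tensorSlice T α)
    (hconciseB : Function.Injective fun (β : Fin b → ℂ) => fun (i : Fin a) (k : Fin b) => ∑ j, β j * T i j k)
    (hconciseC : Function.Injective fun (γ : Fin b → ℂ) => fun (i : Fin a) (j : Fin b) => ∑ k, γ k * T i j k)
    (hbdd : ∀ α : Fin a → ℂ, (tensorSlice T α).rank ≤ b - 1)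
    (hcorank1 : ∃ α : Fin a → ℂ, (tensorSlice T α).rank = b - 1)
    (hprimB : ¬ ∃ H : Submodule ℂ (Fin b → ℂ), Module.finrank ℂ H = b - 1 ∧
      ∀ α : Fin a → ℂ, Module.finrank ℂ (H.map (tensorSlice T α).mulVecLin) ≤ b - 2)
    (hprimC : ¬ ∃ H' : Submodule ℂ (Fin b → ℂ), Module.finrank ℂ H' = b - 1 ∧
      ∀ α : Fin a → ℂ, Module.finrank ℂ (H'.map ((tensorSlice T α).transpose.mulVecLin)) ≤ b - 2) :
    T ∉ closure (rankLE a b b b) :=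
  stmt12_general a b T hconciseB hconciseC hbdd hcorank1 hprimB
end

section
/- Let T = T_{skewcw,2} ⊠ W ∈ ℂ^6 ⊗ ℂ^6 ⊗ ℂ^6. The extended symmetry Lie algebra ĝ_T = {(X,Y,Z) ∈ gl_6(ℂ) × gl_6(ℂ) × gl_6(ℂ) : (X⊗Id⊗Id + Id⊗Y⊗Id + Id⊗Id⊗Z)(T) = 0} has dimension 21. -/
/-- `T_{skewcw,2} ∈ ℂ³⊗ℂ³⊗ℂ³`. -/
noncomputable def Tskewcw2 : Fin 3 → Fin 3 → Fin 3 → ℂ := fun i j k =>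
  ∑ σ : Equiv.Perm (Fin 3),
    ((Equiv.Perm.sign σ : ℤ) : ℂ) * (if i = σ 0 ∧ j = σ 1 ∧ k = σ 2 then 1 else 0)

/-- The `W`-state in `ℂ²⊗ℂ²⊗ℂ²`. -/
noncomputable def Wstate : Fin 2 → Fin 2 → Fin 2 → ℂ := fun i j k =>
  (if i = 0 ∧ j = 0 ∧ k = 1 then 1 else 0) +
  (if i = 0 ∧ j = 1 ∧ k = 0 then 1 else 0) +
  (if i = 1 ∧ j = 0 ∧ k = 0 then 1 else 0)

/-- The Kronecker product `T_{skewcw,2} ⊠ W ∈ ℂ^6 ⊗ ℂ^6 ⊗ ℂ^6`. -/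
noncomputable def TkronW : (Fin 3 × Fin 2) → (Fin 3 × Fin 2) → (Fin 3 × Fin 2) → ℂ :=
  fun i j k => Tskewcw2 i.1 j.1 k.1 * Wstate i.2 j.2 k.2

/-- The extended symmetry Lie algebra
`ĝ_T = {(X,Y,Z) : (X⊗Id⊗Id + Id⊗Y⊗Id + Id⊗Id⊗Z)(T) = 0}`, as a linear subspace of
`gl × gl × gl`. -/
noncomputable def symLie {ι : Type*} [Fintype ι] (T : ι → ι → ι → ℂ) :
    Submodule ℂ (Matrix ι ι ℂ × Matrix ι ι ℂ × Matrix ι ι ℂ) where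
  carrier := {p | ∀ i j k,
    (∑ i', p.1 i i' * T i' j k) + (∑ j', p.2.1 j j' * T i j' k)
      + (∑ k', p.2.2 k k' * T i j k') = 0}
  add_mem' := by
    intro p q hp hq i j k
    simp only [Prod.fst_add, Prod.snd_add, Matrix.add_apply, add_mul,
      Finset.sum_add_distrib]
    linear_combination hp i j k + hq i j k
  zero_mem' := by
    intro i j k
    simp
  smul_mem' := by
    intro c p hp i j k
    simp only [Prod.smul_fst, Prod.smul_snd, Matrix.smul_apply, smul_eq_mul,
      mul_assoc, ← Finset.mul_sum]
    linear_combination c * hp i j k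


lemma Tdet (i j k : Fin 3) :
    Tskewcw2 i j k = Matrix.det (Matrix.of fun a b => if ![i,j,k] b = a then (1:ℂ) else 0) := by
  rw [Matrix.det_apply']
  apply Finset.sum_congr rfl
  intro σ _
  congr 1
  rw [Fin.prod_univ_three]
  simp only [Matrix.of_apply, Matrix.cons_val_zero, Matrix.cons_val_one, Matrix.head_cons,
    Matrix.cons_val_two, Matrix.tail_cons]
  by_cases h1 : i = σ 0 <;> by_cases h2 : j = σ 1 <;> by_cases h3 : k = σ 2 <;>
    simp [h1, h2, h3]

lemma Tval : Tskewcw2 = fun i j k => (![![![0,0,0],![0,0,1],![0,-1,0]],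
    ![![0,0,-1],![0,0,0],![1,0,0]],
    ![![0,1,0],![-1,0,0],![0,0,0]]] : Fin 3 → Fin 3 → Fin 3 → ℂ) i j k := by
  funext i j k
  rw [Tdet]
  fin_cases i <;> fin_cases j <;> fin_cases k <;>
    simp [Matrix.det_fin_three, Matrix.vecHead, Matrix.vecTail]

lemma Wval : Wstate = fun i j k => (![![![0,1],![1,0]],![![1,0],![0,0]]] : Fin 2 → Fin 2 → Fin 2 → ℂ) i j k := by
  funext i j k
  fin_cases i <;> fin_cases j <;> fin_cases k <;> simp [Wstate, Matrix.vecHead, Matrix.vecTail]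


lemma ex6 (g : Fin 3 × Fin 2 → ℂ) : ∑ x, g x = g (0,0) + g (0,1) + g (1,0) + g (1,1) + g (2,0) + g (2,1) := by
  rw [Fintype.sum_prod_type, Fin.sum_univ_three, Fin.sum_univ_two, Fin.sum_univ_two, Fin.sum_univ_two]
  ring

lemma fin3cases (a : Fin 3) : a = 0 ∨ a = 1 ∨ a = 2 := by omega
lemma fin2cases (a : Fin 2) : a = 0 ∨ a = 1 := by omega

noncomputable def params (X Y Z : Matrix (Fin 3 × Fin 2) (Fin 3 × Fin 2) ℂ) : Fin 21 → ℂ :=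
  ![Y (2,0) (2,1), Y (2,1) (2,1), Z (0,0) (0,1), Z (0,0) (1,1), Z (0,0) (2,1), Z (0,1) (0,1), Z (0,1) (1,1), Z (0,1) (2,1), Z (1,0) (0,1), Z (1,0) (1,1), Z (1,0) (2,1), Z (1,1) (0,1), Z (1,1) (1,1), Z (1,1) (2,1), Z (2,0) (0,1), Z (2,0) (1,1), Z (2,0) (2,0), Z (2,0) (2,1), Z (2,1) (0,1), Z (2,1) (1,1), Z (2,1) (2,1)]

noncomputable def gX (v : Fin 21 → ℂ) : Fin 3 → Fin 2 → Fin 3 → Fin 2 → ℂ :=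
  fun a x b y => ![![![![-v 1 - v 12 - v 16 + v 20, -v 0 - v 9], ![v 6, v 3], ![v 7, v 4]], ![![0, -v 1 - v 12 + (-2 : ℂ) * v 16 + (2 : ℂ) * v 20], ![0, v 6], ![0, v 7]]], ![![![v 11, v 8], ![-v 1 - v 5 - v 16 + v 20, -v 0 - v 2], ![v 13, v 10]], ![![0, v 11], ![0, -v 1 - v 5 + (-2 : ℂ) * v 16 + (2 : ℂ) * v 20], ![0, v 13]]], ![![![v 18, v 14], ![v 19, v 15], ![-v 1 - v 5 - v 12 - v 16 + (2 : ℂ) * v 20, -v 0 - v 2 - v 9 + v 17]], ![![0, v 18], ![0, v 19], ![0, -v 1 - v 5 - v 12 + (-2 : ℂ) * v 16 + (3 : ℂ) * v 20]]]] a x b y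

noncomputable def GX (v : Fin 21 → ℂ) : Matrix (Fin 3 × Fin 2) (Fin 3 × Fin 2) ℂ :=
  fun i j => gX v i.1 i.2 j.1 j.2

noncomputable def gY (v : Fin 21 → ℂ) : Fin 3 → Fin 2 → Fin 3 → Fin 2 → ℂ :=
  fun a x b y => ![![![![v 1 + v 5 + v 16 + (-2 : ℂ) * v 20, v 0 + v 2 - v 17], ![v 6, v 3], ![v 7, v 4]], ![![0, v 1 + v 5 - v 20], ![0, v 6], ![0, v 7]]], ![![![v 11, v 8], ![v 1 + v 12 + v 16 + (-2 : ℂ) * v 20, v 0 + v 9 - v 17], ![v 13, v 10]], ![![0, v 11], ![0, v 1 + v 12 - v 20], ![0, v 13]]], ![![![v 18, v 14], ![v 19, v 15], ![v 1 + v 16 - v 20, v 0]], ![![0, v 18], ![0, v 19], ![0, v 1]]]] a x b y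

noncomputable def GY (v : Fin 21 → ℂ) : Matrix (Fin 3 × Fin 2) (Fin 3 × Fin 2) ℂ :=
  fun i j => gY v i.1 i.2 j.1 j.2

noncomputable def gZ (v : Fin 21 → ℂ) : Fin 3 → Fin 2 → Fin 3 → Fin 2 → ℂ :=
  fun a x b y => ![![![![v 5 + v 16 - v 20, v 2], ![v 6, v 3], ![v 7, v 4]], ![![0, v 5], ![0, v 6], ![0, v 7]]], ![![![v 11, v 8], ![v 12 + v 16 - v 20, v 9], ![v 13, v 10]], ![![0, v 11], ![0, v 12], ![0, v 13]]], ![![![v 18, v 14], ![v 19, v 15], ![v 16, v 17]], ![![0, v 18], ![0, v 19], ![0, v 20]]]] a x b y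

noncomputable def GZ (v : Fin 21 → ℂ) : Matrix (Fin 3 × Fin 2) (Fin 3 × Fin 2) ℂ :=
  fun i j => gZ v i.1 i.2 j.1 j.2


set_option maxHeartbeats 4000000 in
lemma Gmem (v : Fin 21 → ℂ) : (GX v, GY v, GZ v) ∈ symLie TkronW := by
  intro i j k
  obtain ⟨i1, i2⟩ := i
  obtain ⟨j1, j2⟩ := j
  obtain ⟨k1, k2⟩ := k
  rcases fin3cases i1 with rfl|rfl|rfl <;> rcases fin2cases i2 with rfl|rfl <;>
    rcases fin3cases j1 with rfl|rfl|rfl <;> rcases fin2cases j2 with rfl|rfl <;>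
    rcases fin3cases k1 with rfl|rfl|rfl <;> rcases fin2cases k2 with rfl|rfl <;>
    (simp only [GX, GY, GZ, gX, gY, gZ, ex6, TkronW, Tval, Wval, Matrix.cons_val_zero, Matrix.cons_val_one, Matrix.head_cons, Matrix.cons_val_two, Matrix.tail_cons, Matrix.vecHead, Matrix.vecTail, Function.comp_apply, Fin.succ_zero_eq_one, Fin.succ_one_eq_two, mul_zero, mul_one, zero_add, add_zero, mul_neg, neg_mul, one_mul, zero_mul, neg_neg]; try ring)

noncomputable def Fmap : symLie TkronW →ₗ[ℂ] (Fin 21 → ℂ) where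
  toFun p := params p.1.1 p.1.2.1 p.1.2.2
  map_add' p q := by
    funext t
    fin_cases t <;> rfl
  map_smul' c p := by
    funext t
    fin_cases t <;> rfl

set_option maxHeartbeats 4000000 in
lemma Finj : Function.Injective Fmap := by
  rw [injective_iff_map_eq_zero]
  intro p hF0
  obtain ⟨⟨X, Y, Z⟩, hmem⟩ := p
  have hF0 : params X Y Z = 0 := hF0
  have hp : ∀ i j k, (∑ i', X i i' * TkronW i' j k) + (∑ j', Y j j' * TkronW i j' k) + (∑ k', Z k k' * TkronW i j k') = 0 := hmem
  have q0 : Y (2,0) (2,1) = 0 := by simpa [params] using congrFun hF0 0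
  have q1 : Y (2,1) (2,1) = 0 := by simpa [params] using congrFun hF0 1
  have q2 : Z (0,0) (0,1) = 0 := by simpa [params] using congrFun hF0 2
  have q3 : Z (0,0) (1,1) = 0 := by simpa [params] using congrFun hF0 3
  have q4 : Z (0,0) (2,1) = 0 := by simpa [params] using congrFun hF0 4
  have q5 : Z (0,1) (0,1) = 0 := by simpa [params] using congrFun hF0 5
  have q6 : Z (0,1) (1,1) = 0 := by simpa [params] using congrFun hF0 6
  have q7 : Z (0,1) (2,1) = 0 := by simpa [params] using congrFun hF0 7
  have q8 : Z (1,0) (0,1) = 0 := by simpa [params] using congrFun hF0 8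
  have q9 : Z (1,0) (1,1) = 0 := by simpa [params] using congrFun hF0 9
  have q10 : Z (1,0) (2,1) = 0 := by simpa [params] using congrFun hF0 10
  have q11 : Z (1,1) (0,1) = 0 := by simpa [params] using congrFun hF0 11
  have q12 : Z (1,1) (1,1) = 0 := by simpa [params] using congrFun hF0 12
  have q13 : Z (1,1) (2,1) = 0 := by simpa [params] using congrFun hF0 13
  have q14 : Z (2,0) (0,1) = 0 := by simpa [params] using congrFun hF0 14
  have q15 : Z (2,0) (1,1) = 0 := by simpa [params] using congrFun hF0 15
  have q16 : Z (2,0) (2,0) = 0 := by simpa [params] using congrFun hF0 16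
  have q17 : Z (2,0) (2,1) = 0 := by simpa [params] using congrFun hF0 17
  have q18 : Z (2,1) (0,1) = 0 := by simpa [params] using congrFun hF0 18
  have q19 : Z (2,1) (1,1) = 0 := by simpa [params] using congrFun hF0 19
  have q20 : Z (2,1) (2,1) = 0 := by simpa [params] using congrFun hF0 20
  have e0 := hp (0,0) (0,0) (1,0)
  have e1 := hp (0,0) (0,0) (1,1)
  have e2 := hp (0,0) (0,0) (2,0)
  have e3 := hp (0,0) (0,0) (2,1)
  have e4 := hp (0,0) (0,1) (1,0)
  have e5 := hp (0,0) (0,1) (2,0)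
  have e6 := hp (0,0) (1,0) (1,0)
  have e7 := hp (0,0) (1,0) (2,0)
  have e8 := hp (0,0) (1,0) (2,1)
  have e9 := hp (0,0) (1,1) (2,0)
  have e10 := hp (0,0) (1,1) (2,1)
  have e11 := hp (0,0) (2,0) (1,0)
  have e12 := hp (0,0) (2,0) (1,1)
  have e13 := hp (0,0) (2,0) (2,0)
  have e14 := hp (0,0) (2,0) (2,1)
  have e15 := hp (0,1) (0,0) (1,0)
  have e16 := hp (0,1) (0,0) (1,1)
  have e17 := hp (0,1) (0,0) (2,0)
  have e18 := hp (0,1) (0,0) (2,1)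
  have e19 := hp (0,1) (0,1) (1,0)
  have e20 := hp (0,1) (0,1) (2,0)
  have e21 := hp (0,1) (1,0) (0,0)
  have e22 := hp (0,1) (1,0) (1,0)
  have e23 := hp (0,1) (1,0) (2,0)
  have e24 := hp (0,1) (1,0) (2,1)
  have e25 := hp (0,1) (1,1) (1,0)
  have e26 := hp (0,1) (1,1) (2,0)
  have e27 := hp (0,1) (2,0) (0,0)
  have e28 := hp (0,1) (2,0) (0,1)
  have e29 := hp (0,1) (2,0) (1,0)
  have e30 := hp (0,1) (2,0) (1,1)
  have e31 := hp (0,1) (2,0) (2,0)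
  have e32 := hp (0,1) (2,0) (2,1)
  have e33 := hp (0,1) (2,1) (2,0)
  have e34 := hp (1,0) (0,0) (0,0)
  have e35 := hp (1,0) (0,0) (0,1)
  have e36 := hp (1,0) (0,0) (1,0)
  have e37 := hp (1,0) (0,0) (1,1)
  have e38 := hp (1,0) (0,0) (2,0)
  have e39 := hp (1,0) (0,0) (2,1)
  have e40 := hp (1,0) (0,1) (0,1)
  have e41 := hp (1,0) (0,1) (1,0)
  have e42 := hp (1,0) (0,1) (1,1)
  have e43 := hp (1,0) (0,1) (2,0)
  have e44 := hp (1,0) (0,1) (2,1)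
  have e45 := hp (1,0) (1,0) (2,0)
  have e46 := hp (1,0) (1,0) (2,1)
  have e47 := hp (1,0) (1,1) (0,0)
  have e48 := hp (1,0) (1,1) (2,0)
  have e49 := hp (1,0) (1,1) (2,1)
  have e50 := hp (1,0) (2,0) (0,0)
  have e51 := hp (1,0) (2,0) (0,1)
  have e52 := hp (1,0) (2,0) (1,0)
  have e53 := hp (1,0) (2,0) (1,1)
  have e54 := hp (1,0) (2,0) (2,0)
  have e55 := hp (1,0) (2,0) (2,1)
  have e56 := hp (1,0) (2,1) (0,0)
  have e57 := hp (1,0) (2,1) (0,1)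
  have e58 := hp (1,0) (2,1) (1,0)
  have e59 := hp (1,0) (2,1) (1,1)
  have e60 := hp (1,0) (2,1) (2,0)
  have e61 := hp (1,0) (2,1) (2,1)
  have e62 := hp (1,1) (0,0) (1,0)
  have e63 := hp (1,1) (0,0) (1,1)
  have e64 := hp (1,1) (0,0) (2,0)
  have e65 := hp (1,1) (0,0) (2,1)
  have e66 := hp (1,1) (1,0) (2,0)
  have e67 := hp (1,1) (1,0) (2,1)
  have e68 := hp (1,1) (2,0) (0,0)
  have e69 := hp (1,1) (2,0) (0,1)
  have e70 := hp (1,1) (2,0) (2,0)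
  have e71 := hp (1,1) (2,0) (2,1)
  have e72 := hp (2,0) (0,0) (0,0)
  have e73 := hp (2,0) (0,0) (0,1)
  have e74 := hp (2,0) (0,0) (1,0)
  have e75 := hp (2,0) (0,0) (1,1)
  have e76 := hp (2,0) (0,0) (2,0)
  have e77 := hp (2,0) (0,0) (2,1)
  have e78 := hp (2,0) (1,0) (2,0)
  have e79 := hp (2,0) (1,0) (2,1)
  have e80 := hp (2,0) (2,1) (0,0)
  have e81 := hp (2,1) (0,0) (1,0)
  have e82 := hp (2,1) (0,0) (1,1)
  have e83 := hp (2,1) (0,0) (2,0)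
  have e84 := hp (2,1) (0,0) (2,1)
  have e85 := hp (2,1) (1,0) (2,0)
  have e86 := hp (2,1) (1,0) (2,1)
  simp only [ex6, TkronW, Tval, Wval, Matrix.cons_val_zero, Matrix.cons_val_one, Matrix.head_cons, Matrix.cons_val_two, Matrix.tail_cons, Matrix.vecHead, Matrix.vecTail, Function.comp_apply, Fin.succ_zero_eq_one, Fin.succ_one_eq_two, mul_zero, mul_one, zero_add, add_zero, mul_neg, neg_mul, one_mul, zero_mul, neg_neg] at e0 e1 e2 e3 e4 e5 e6 e7 e8 e9 e10 e11 e12 e13 e14 e15 e16 e17 e18 e19 e20 e21 e22 e23 e24 e25 e26 e27 e28 e29 e30 e31 e32 e33 e34 e35 e36 e37 e38 e39 e40 e41 e42 e43 e44 e45 e46 e47 e48 e49 e50 e51 e52 e53 e54 e55 e56 e57 e58 e59 e60 e61 e62 e63 e64 e65 e66 e67 e68 e69 e70 e71 e72 e73 e74 e75 e76 e77 e78 e79 e80 e81 e82 e83 e84 e85 e86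
  have zX_0_0 : X (0,0) (0,0) = 0 := by linear_combination (-1 : ℂ) * e12 + (1 : ℂ) * e39 + (1 : ℂ) * e56 + (-1 : ℂ) * e64 + (-1 : ℂ) * e68 + (-1 : ℂ) * q1 + (-1 : ℂ) * q12 + (-1 : ℂ) * q16 + (1 : ℂ) * q20
  have zX_0_1 : X (0,0) (0,1) = 0 := by linear_combination (-1 : ℂ) * e11 + (-1 : ℂ) * q0 + (-1 : ℂ) * q9
  have zX_0_2 : X (0,0) (1,0) = 0 := by linear_combination (-1 : ℂ) * e3 + (-1 : ℂ) * e73 + (1 : ℂ) * q6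
  have zX_0_3 : X (0,0) (1,1) = 0 := by linear_combination (-1 : ℂ) * e2 + (-1 : ℂ) * e72 + (1 : ℂ) * q3
  have zX_0_4 : X (0,0) (2,0) = 0 := by linear_combination (1 : ℂ) * e1 + (1 : ℂ) * e35 + (1 : ℂ) * q7
  have zX_0_5 : X (0,0) (2,1) = 0 := by linear_combination (1 : ℂ) * e0 + (1 : ℂ) * e34 + (1 : ℂ) * q4
  have zX_1_0 : X (0,1) (0,0) = 0 := by linear_combination (-1/2 : ℂ) * e10 + (1/2 : ℂ) * e24 + (1/2 : ℂ) * e26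
  have zX_1_1 : X (0,1) (0,1) = 0 := by linear_combination (-1 : ℂ) * e8 + (-1 : ℂ) * e12 + (1 : ℂ) * e23 + (1 : ℂ) * e39 + (1 : ℂ) * e56 + (-1 : ℂ) * e64 + (-1 : ℂ) * e68 + (-1 : ℂ) * q1 + (-1 : ℂ) * q12 + (-2 : ℂ) * q16 + (2 : ℂ) * q20
  have zX_1_2 : X (0,1) (1,0) = 0 := by linear_combination (-1 : ℂ) * e18
  have zX_1_3 : X (0,1) (1,1) = 0 := by linear_combination (-1 : ℂ) * e17 + (-1 : ℂ) * e73 + (1 : ℂ) * q6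
  have zX_1_4 : X (0,1) (2,0) = 0 := by linear_combination (1 : ℂ) * e16
  have zX_1_5 : X (0,1) (2,1) = 0 := by linear_combination (1 : ℂ) * e15 + (1 : ℂ) * e35 + (1 : ℂ) * q7
  have zX_2_0 : X (1,0) (0,0) = 0 := by linear_combination (-1 : ℂ) * e53 + (1 : ℂ) * q11
  have zX_2_1 : X (1,0) (0,1) = 0 := by linear_combination (-1 : ℂ) * e52 + (1 : ℂ) * q8
  have zX_2_2 : X (1,0) (1,0) = 0 := by linear_combination (1 : ℂ) * e39 + (1 : ℂ) * e51 + (1 : ℂ) * e56 + (-1 : ℂ) * e64 + (-1 : ℂ) * e68 + (-1 : ℂ) * q1 + (-1 : ℂ) * q5 + (-1 : ℂ) * q16 + (1 : ℂ) * q20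
  have zX_2_3 : X (1,0) (1,1) = 0 := by linear_combination (1 : ℂ) * e50 + (-1 : ℂ) * q0 + (-1 : ℂ) * q2
  have zX_2_4 : X (1,0) (2,0) = 0 := by linear_combination (1 : ℂ) * e37 + (1 : ℂ) * q13
  have zX_2_5 : X (1,0) (2,1) = 0 := by linear_combination (1 : ℂ) * e36 + (1 : ℂ) * q10
  have zX_3_0 : X (1,1) (0,0) = 0 := by linear_combination (1 : ℂ) * e67
  have zX_3_1 : X (1,1) (0,1) = 0 := by linear_combination (-1 : ℂ) * e46 + (-1 : ℂ) * e53 + (1 : ℂ) * e66 + (1 : ℂ) * q11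
  have zX_3_2 : X (1,1) (1,0) = 0 := by linear_combination (-1/2 : ℂ) * e10 + (-1/2 : ℂ) * e24 + (1/2 : ℂ) * e26 + (-1 : ℂ) * e65
  have zX_3_3 : X (1,1) (1,1) = 0 := by linear_combination (2 : ℂ) * e39 + (1 : ℂ) * e51 + (1 : ℂ) * e56 + (-2 : ℂ) * e64 + (-1 : ℂ) * e68 + (-1 : ℂ) * q1 + (-1 : ℂ) * q5 + (-2 : ℂ) * q16 + (2 : ℂ) * q20
  have zX_3_4 : X (1,1) (2,0) = 0 := by linear_combination (-1 : ℂ) * e42 + (1 : ℂ) * e63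
  have zX_3_5 : X (1,1) (2,1) = 0 := by linear_combination (1 : ℂ) * e37 + (-1 : ℂ) * e41 + (1 : ℂ) * e62 + (1 : ℂ) * q13
  have zX_4_0 : X (2,0) (0,0) = 0 := by linear_combination (1 : ℂ) * e79 + (1 : ℂ) * q18
  have zX_4_1 : X (2,0) (0,1) = 0 := by linear_combination (1 : ℂ) * e78 + (1 : ℂ) * q14
  have zX_4_2 : X (2,0) (1,0) = 0 := by linear_combination (-1 : ℂ) * e77 + (1 : ℂ) * q19
  have zX_4_3 : X (2,0) (1,1) = 0 := by linear_combination (-1 : ℂ) * e76 + (1 : ℂ) * q15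
  have zX_4_4 : X (2,0) (2,0) = 0 := by linear_combination (2 : ℂ) * e39 + (1 : ℂ) * e51 + (1 : ℂ) * e56 + (-1 : ℂ) * e64 + (-1 : ℂ) * e68 + (1 : ℂ) * e75 + (-1 : ℂ) * q1 + (-1 : ℂ) * q5 + (-1 : ℂ) * q12 + (-1 : ℂ) * q16 + (2 : ℂ) * q20
  have zX_4_5 : X (2,0) (2,1) = 0 := by linear_combination (1 : ℂ) * e38 + (1 : ℂ) * e50 + (1 : ℂ) * e74 + (-1 : ℂ) * q0 + (-1 : ℂ) * q2 + (-1 : ℂ) * q9 + (1 : ℂ) * q17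
  have zX_5_0 : X (2,1) (0,0) = 0 := by linear_combination (1 : ℂ) * e71 + (1 : ℂ) * e86
  have zX_5_1 : X (2,1) (0,1) = 0 := by linear_combination (-1 : ℂ) * e55 + (1 : ℂ) * e70 + (1 : ℂ) * e85 + (1 : ℂ) * q18
  have zX_5_2 : X (2,1) (1,0) = 0 := by linear_combination (-1 : ℂ) * e32 + (-1 : ℂ) * e84
  have zX_5_3 : X (2,1) (1,1) = 0 := by linear_combination (1 : ℂ) * e14 + (-1 : ℂ) * e31 + (-1 : ℂ) * e83 + (1 : ℂ) * q19
  have zX_5_4 : X (2,1) (2,0) = 0 := by linear_combination (-1/2 : ℂ) * e10 + (1/2 : ℂ) * e24 + (1/2 : ℂ) * e26 + (1 : ℂ) * e30 + (1 : ℂ) * e82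
  have zX_5_5 : X (2,1) (2,1) = 0 := by linear_combination (-1 : ℂ) * e8 + (-1 : ℂ) * e12 + (1 : ℂ) * e23 + (1 : ℂ) * e29 + (2 : ℂ) * e39 + (1 : ℂ) * e51 + (1 : ℂ) * e56 + (-1 : ℂ) * e64 + (-1 : ℂ) * e68 + (1 : ℂ) * e81 + (-1 : ℂ) * q1 + (-1 : ℂ) * q5 + (-1 : ℂ) * q12 + (-2 : ℂ) * q16 + (3 : ℂ) * q20
  have zY_0_0 : Y (0,0) (0,0) = 0 := by linear_combination (-2 : ℂ) * e39 + (-1 : ℂ) * e51 + (-1 : ℂ) * e56 + (1 : ℂ) * e64 + (1 : ℂ) * e68 + (1 : ℂ) * q1 + (1 : ℂ) * q5 + (1 : ℂ) * q16 + (-2 : ℂ) * q20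
  have zY_0_1 : Y (0,0) (0,1) = 0 := by linear_combination (-1 : ℂ) * e38 + (-1 : ℂ) * e50 + (1 : ℂ) * q0 + (1 : ℂ) * q2 + (-1 : ℂ) * q17
  have zY_0_2 : Y (0,0) (1,0) = 0 := by linear_combination (-1 : ℂ) * e73 + (1 : ℂ) * q6
  have zY_0_3 : Y (0,0) (1,1) = 0 := by linear_combination (-1 : ℂ) * e72 + (1 : ℂ) * q3
  have zY_0_4 : Y (0,0) (2,0) = 0 := by linear_combination (1 : ℂ) * e35 + (1 : ℂ) * q7
  have zY_0_5 : Y (0,0) (2,1) = 0 := by linear_combination (1 : ℂ) * e34 + (1 : ℂ) * q4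
  have zY_1_0 : Y (0,1) (0,0) = 0 := by linear_combination (-1/2 : ℂ) * e10 + (-1/2 : ℂ) * e24 + (1/2 : ℂ) * e26 + (-1 : ℂ) * e44
  have zY_1_1 : Y (0,1) (0,1) = 0 := by linear_combination (-1 : ℂ) * e39 + (-1 : ℂ) * e43 + (-1 : ℂ) * e51 + (-1 : ℂ) * e56 + (1 : ℂ) * e64 + (1 : ℂ) * e68 + (1 : ℂ) * q1 + (1 : ℂ) * q5 + (-1 : ℂ) * q20
  have zY_1_2 : Y (0,1) (1,0) = 0 := by linear_combination (-1 : ℂ) * e18 + (1 : ℂ) * e20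
  have zY_1_3 : Y (0,1) (1,1) = 0 := by linear_combination (-1 : ℂ) * e3 + (1 : ℂ) * e5 + (-1 : ℂ) * e73 + (1 : ℂ) * q6
  have zY_1_4 : Y (0,1) (2,0) = 0 := by linear_combination (1 : ℂ) * e16 + (-1 : ℂ) * e19
  have zY_1_5 : Y (0,1) (2,1) = 0 := by linear_combination (1 : ℂ) * e1 + (-1 : ℂ) * e4 + (1 : ℂ) * e35 + (1 : ℂ) * q7
  have zY_2_0 : Y (1,0) (0,0) = 0 := by linear_combination (-1 : ℂ) * e46 + (-1 : ℂ) * e53 + (1 : ℂ) * q11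
  have zY_2_1 : Y (1,0) (0,1) = 0 := by linear_combination (-1 : ℂ) * e45 + (-1 : ℂ) * e52 + (1 : ℂ) * q8
  have zY_2_2 : Y (1,0) (1,0) = 0 := by linear_combination (1 : ℂ) * e8 + (1 : ℂ) * e12 + (-1 : ℂ) * e39 + (-1 : ℂ) * e56 + (1 : ℂ) * e64 + (1 : ℂ) * e68 + (1 : ℂ) * q1 + (1 : ℂ) * q12 + (1 : ℂ) * q16 + (-2 : ℂ) * q20
  have zY_2_3 : Y (1,0) (1,1) = 0 := by linear_combination (1 : ℂ) * e7 + (1 : ℂ) * e11 + (1 : ℂ) * q0 + (1 : ℂ) * q9 + (-1 : ℂ) * q17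
  have zY_2_4 : Y (1,0) (2,0) = 0 := by linear_combination (-1 : ℂ) * e22 + (1 : ℂ) * e37 + (-1 : ℂ) * e41 + (1 : ℂ) * q13
  have zY_2_5 : Y (1,0) (2,1) = 0 := by linear_combination (-1 : ℂ) * e6 + (1 : ℂ) * q10
  have zY_3_0 : Y (1,1) (0,0) = 0 := by linear_combination (-1 : ℂ) * e49
  have zY_3_1 : Y (1,1) (0,1) = 0 := by linear_combination (-1 : ℂ) * e48 + (-1 : ℂ) * e53 + (1 : ℂ) * q11
  have zY_3_2 : Y (1,1) (1,0) = 0 := by linear_combination (1/2 : ℂ) * e10 + (-1/2 : ℂ) * e24 + (1/2 : ℂ) * e26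
  have zY_3_3 : Y (1,1) (1,1) = 0 := by linear_combination (1 : ℂ) * e9 + (1 : ℂ) * e12 + (-1 : ℂ) * e39 + (-1 : ℂ) * e56 + (1 : ℂ) * e64 + (1 : ℂ) * e68 + (1 : ℂ) * q1 + (1 : ℂ) * q12 + (-1 : ℂ) * q20
  have zY_3_4 : Y (1,1) (2,0) = 0 := by linear_combination (-1 : ℂ) * e25
  have zY_3_5 : Y (1,1) (2,1) = 0 := by linear_combination (1 : ℂ) * e37 + (1 : ℂ) * e47 + (1 : ℂ) * q13
  have zY_4_0 : Y (2,0) (0,0) = 0 := by linear_combination (-1 : ℂ) * e55 + (1 : ℂ) * q18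
  have zY_4_1 : Y (2,0) (0,1) = 0 := by linear_combination (-1 : ℂ) * e54 + (1 : ℂ) * q14
  have zY_4_2 : Y (2,0) (1,0) = 0 := by linear_combination (1 : ℂ) * e14 + (1 : ℂ) * q19
  have zY_4_3 : Y (2,0) (1,1) = 0 := by linear_combination (1 : ℂ) * e13 + (1 : ℂ) * q15
  have zY_4_4 : Y (2,0) (2,0) = 0 := by linear_combination (-1 : ℂ) * e39 + (-1 : ℂ) * e56 + (1 : ℂ) * e64 + (1 : ℂ) * e68 + (1 : ℂ) * q1 + (1 : ℂ) * q16 + (-1 : ℂ) * q20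
  have zY_4_5 : Y (2,0) (2,1) = 0 := q0
  have zY_5_0 : Y (2,1) (0,0) = 0 := by linear_combination (-1 : ℂ) * e61 + (1 : ℂ) * e71
  have zY_5_1 : Y (2,1) (0,1) = 0 := by linear_combination (-1 : ℂ) * e55 + (-1 : ℂ) * e60 + (1 : ℂ) * e70 + (1 : ℂ) * q18
  have zY_5_2 : Y (2,1) (1,0) = 0 := by linear_combination (1 : ℂ) * e33
  have zY_5_3 : Y (2,1) (1,1) = 0 := by linear_combination (-1 : ℂ) * e77 + (-1 : ℂ) * e80 + (1 : ℂ) * q19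
  have zY_5_4 : Y (2,1) (2,0) = 0 := by linear_combination (-1/2 : ℂ) * e10 + (-1/2 : ℂ) * e24 + (1/2 : ℂ) * e26 + (1 : ℂ) * e57 + (-1 : ℂ) * e65 + (-1 : ℂ) * e69
  have zY_5_5 : Y (2,1) (2,1) = 0 := q1
  have zZ_0_0 : Z (0,0) (0,0) = 0 := by linear_combination (-1 : ℂ) * e39 + (-1 : ℂ) * e51 + (1 : ℂ) * e64 + (1 : ℂ) * e68 + (1 : ℂ) * q5 + (1 : ℂ) * q16 + (-1 : ℂ) * q20
  have zZ_0_1 : Z (0,0) (0,1) = 0 := q2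
  have zZ_0_2 : Z (0,0) (1,0) = 0 := by linear_combination (-1 : ℂ) * e17 + (-1 : ℂ) * e27 + (-1 : ℂ) * e73 + (1 : ℂ) * q6
  have zZ_0_3 : Z (0,0) (1,1) = 0 := q3
  have zZ_0_4 : Z (0,0) (2,0) = 0 := by linear_combination (1 : ℂ) * e15 + (1 : ℂ) * e21 + (1 : ℂ) * e35 + (1 : ℂ) * q7
  have zZ_0_5 : Z (0,0) (2,1) = 0 := q4
  have zZ_1_0 : Z (0,1) (0,0) = 0 := by linear_combination (1/2 : ℂ) * e10 + (1/2 : ℂ) * e24 + (-1/2 : ℂ) * e26 + (1 : ℂ) * e65 + (1 : ℂ) * e69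
  have zZ_1_1 : Z (0,1) (0,1) = 0 := q5
  have zZ_1_2 : Z (0,1) (1,0) = 0 := by linear_combination (-1 : ℂ) * e18 + (-1 : ℂ) * e28
  have zZ_1_3 : Z (0,1) (1,1) = 0 := q6
  have zZ_1_4 : Z (0,1) (2,0) = 0 := by linear_combination (1 : ℂ) * e16 + (-1 : ℂ) * e19 + (-1 : ℂ) * e40
  have zZ_1_5 : Z (0,1) (2,1) = 0 := q7
  have zZ_2_0 : Z (1,0) (0,0) = 0 := by linear_combination (-1 : ℂ) * e53 + (1 : ℂ) * e58 + (1 : ℂ) * q11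
  have zZ_2_1 : Z (1,0) (0,1) = 0 := q8
  have zZ_2_2 : Z (1,0) (1,0) = 0 := by linear_combination (1 : ℂ) * e8 + (1 : ℂ) * e12 + (-1 : ℂ) * e23 + (-1 : ℂ) * e29 + (1 : ℂ) * q12 + (1 : ℂ) * q16 + (-1 : ℂ) * q20
  have zZ_2_3 : Z (1,0) (1,1) = 0 := q9
  have zZ_2_4 : Z (1,0) (2,0) = 0 := by linear_combination (1 : ℂ) * e37 + (-1 : ℂ) * e41 + (1 : ℂ) * q13
  have zZ_2_5 : Z (1,0) (2,1) = 0 := q10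
  have zZ_3_0 : Z (1,1) (0,0) = 0 := by linear_combination (1 : ℂ) * e59
  have zZ_3_1 : Z (1,1) (0,1) = 0 := q11
  have zZ_3_2 : Z (1,1) (1,0) = 0 := by linear_combination (1/2 : ℂ) * e10 + (-1/2 : ℂ) * e24 + (-1/2 : ℂ) * e26 + (-1 : ℂ) * e30
  have zZ_3_3 : Z (1,1) (1,1) = 0 := q12
  have zZ_3_4 : Z (1,1) (2,0) = 0 := by linear_combination (-1 : ℂ) * e42
  have zZ_3_5 : Z (1,1) (2,1) = 0 := q13
  have zZ_4_0 : Z (2,0) (0,0) = 0 := by linear_combination (-1 : ℂ) * e55 + (1 : ℂ) * e70 + (1 : ℂ) * q18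
  have zZ_4_1 : Z (2,0) (0,1) = 0 := q14
  have zZ_4_2 : Z (2,0) (1,0) = 0 := by linear_combination (1 : ℂ) * e14 + (-1 : ℂ) * e31 + (1 : ℂ) * q19
  have zZ_4_3 : Z (2,0) (1,1) = 0 := q15
  have zZ_4_4 : Z (2,0) (2,0) = 0 := q16
  have zZ_4_5 : Z (2,0) (2,1) = 0 := q17
  have zZ_5_0 : Z (2,1) (0,0) = 0 := by linear_combination (1 : ℂ) * e71
  have zZ_5_1 : Z (2,1) (0,1) = 0 := q18
  have zZ_5_2 : Z (2,1) (1,0) = 0 := by linear_combination (-1 : ℂ) * e32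
  have zZ_5_3 : Z (2,1) (1,1) = 0 := q19
  have zZ_5_4 : Z (2,1) (2,0) = 0 := by linear_combination (1/2 : ℂ) * e10 + (1/2 : ℂ) * e24 + (-1/2 : ℂ) * e26
  have zZ_5_5 : Z (2,1) (2,1) = 0 := q20
  refine Subtype.ext (Prod.ext ?_ (Prod.ext ?_ ?_))
  all_goals funext i j
  all_goals obtain ⟨i1, i2⟩ := i
  all_goals obtain ⟨j1, j2⟩ := j
  · rcases fin3cases i1 with rfl|rfl|rfl <;> rcases fin2cases i2 with rfl|rfl <;> rcases fin3cases j1 with rfl|rfl|rfl <;> rcases fin2cases j2 with rfl|rfl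
    · exact zX_0_0
    · exact zX_0_1
    · exact zX_0_2
    · exact zX_0_3
    · exact zX_0_4
    · exact zX_0_5
    · exact zX_1_0
    · exact zX_1_1
    · exact zX_1_2
    · exact zX_1_3
    · exact zX_1_4
    · exact zX_1_5
    · exact zX_2_0
    · exact zX_2_1
    · exact zX_2_2
    · exact zX_2_3
    · exact zX_2_4
    · exact zX_2_5
    · exact zX_3_0
    · exact zX_3_1
    · exact zX_3_2
    · exact zX_3_3
    · exact zX_3_4
    · exact zX_3_5
    · exact zX_4_0
    · exact zX_4_1
    · exact zX_4_2
    · exact zX_4_3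
    · exact zX_4_4
    · exact zX_4_5
    · exact zX_5_0
    · exact zX_5_1
    · exact zX_5_2
    · exact zX_5_3
    · exact zX_5_4
    · exact zX_5_5
  · rcases fin3cases i1 with rfl|rfl|rfl <;> rcases fin2cases i2 with rfl|rfl <;> rcases fin3cases j1 with rfl|rfl|rfl <;> rcases fin2cases j2 with rfl|rfl
    · exact zY_0_0
    · exact zY_0_1
    · exact zY_0_2
    · exact zY_0_3
    · exact zY_0_4
    · exact zY_0_5
    · exact zY_1_0
    · exact zY_1_1
    · exact zY_1_2
    · exact zY_1_3
    · exact zY_1_4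
    · exact zY_1_5
    · exact zY_2_0
    · exact zY_2_1
    · exact zY_2_2
    · exact zY_2_3
    · exact zY_2_4
    · exact zY_2_5
    · exact zY_3_0
    · exact zY_3_1
    · exact zY_3_2
    · exact zY_3_3
    · exact zY_3_4
    · exact zY_3_5
    · exact zY_4_0
    · exact zY_4_1
    · exact zY_4_2
    · exact zY_4_3
    · exact zY_4_4
    · exact zY_4_5
    · exact zY_5_0
    · exact zY_5_1
    · exact zY_5_2
    · exact zY_5_3
    · exact zY_5_4
    · exact zY_5_5
  · rcases fin3cases i1 with rfl|rfl|rfl <;> rcases fin2cases i2 with rfl|rfl <;> rcases fin3cases j1 with rfl|rfl|rfl <;> rcases fin2cases j2 with rfl|rfl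
    · exact zZ_0_0
    · exact zZ_0_1
    · exact zZ_0_2
    · exact zZ_0_3
    · exact zZ_0_4
    · exact zZ_0_5
    · exact zZ_1_0
    · exact zZ_1_1
    · exact zZ_1_2
    · exact zZ_1_3
    · exact zZ_1_4
    · exact zZ_1_5
    · exact zZ_2_0
    · exact zZ_2_1
    · exact zZ_2_2
    · exact zZ_2_3
    · exact zZ_2_4
    · exact zZ_2_5
    · exact zZ_3_0
    · exact zZ_3_1
    · exact zZ_3_2
    · exact zZ_3_3
    · exact zZ_3_4
    · exact zZ_3_5
    · exact zZ_4_0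
    · exact zZ_4_1
    · exact zZ_4_2
    · exact zZ_4_3
    · exact zZ_4_4
    · exact zZ_4_5
    · exact zZ_5_0
    · exact zZ_5_1
    · exact zZ_5_2
    · exact zZ_5_3
    · exact zZ_5_4
    · exact zZ_5_5

lemma Fsurj : Function.Surjective Fmap := by
  intro v
  refine ⟨⟨(GX v, GY v, GZ v), Gmem v⟩, ?_⟩
  funext t
  fin_cases t <;> rfl

/-- The extended symmetry Lie algebra of `T_{skewcw,2} ⊠ W` has dimension `21`. -/
theorem stmt15 : Module.finrank ℂ (symLie TkronW) = 21 := by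
  have e : (symLie TkronW) ≃ₗ[ℂ] (Fin 21 → ℂ) :=
    LinearEquiv.ofBijective Fmap ⟨Finj, Fsurj⟩
  rw [e.finrank_eq]
  simp
end

section
/- Let p ≥ 2 and b = p + 3. For a = (a1,…,a_{2p}) ∈ ℂ^{2p}, let M(a) be the b × (2b−6) block matrix [[x(a), W(a)],[U(a), 0]] with blocking (b−2, 2) rows × (b−2, b−4) columns, where x(a) = a1·Id_{b−2}; W(a) has first row (−a3, −a5, …, −a_{2p−1}), second row (−a4, −a6, …, −a_{2p}), and its remaining (b−4)×(b−4) block equals a2·Id_{b−4}; and U(a) = [[−a2, 0, −a3, −a5, …, −a_{2p−1}],[0, −a2, −a4, −a6, …, −a_{2p}]]. Then every M(a) has rank at most b−2, i.e., {M(a) : a ∈ ℂ^{2p}} is a 2(b−3)-dimensional space of b×(2b−6) matrices of bounded rank b−2. -/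
open Matrix

/-- The generalized Case (III) family (\S7 of the paper): for `b = p+3` and
`a ∈ ℂ^{2p}`, the `b × (2b−6)` block matrix `[[x(a), W(a)], [U(a), 0]]` with
`x(a) = a1·Id_{b−2}`, `W(a)` having rows `(−a3, −a5, …, −a_{2p−1})`,
`(−a4, −a6, …, −a_{2p})` followed by `a2·Id_{b−4}`, and
`U(a) = [[−a2, 0, −a3, −a5, …, −a_{2p−1}], [0, −a2, −a4, −a6, …, −a_{2p}]]`.
(Here `a1 = a 0`, `a2 = a 1`, …, `a_{2p} = a (2p−1)`.) -/
noncomputable def Mgen (p : ℕ) (hp : 2 ≤ p) (a : Fin (2 * p) → ℂ) :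
    Matrix (Fin (p + 1) ⊕ Fin 2) (Fin (p + 1) ⊕ Fin (p - 1)) ℂ :=
  Matrix.fromBlocks
    (a ⟨0, by omega⟩ • (1 : Matrix (Fin (p + 1)) (Fin (p + 1)) ℂ))
    (Matrix.of fun (i : Fin (p + 1)) (j : Fin (p - 1)) =>
      if (i : ℕ) = 0 then -(a ⟨2 * (j : ℕ) + 2, by have := j.isLt; omega⟩)
      else if (i : ℕ) = 1 then -(a ⟨2 * (j : ℕ) + 3, by have := j.isLt; omega⟩)
      else if (i : ℕ) = (j : ℕ) + 2 then a ⟨1, by omega⟩ else 0)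
    (Matrix.of fun (i : Fin 2) (j : Fin (p + 1)) =>
      if (j : ℕ) = 0 then (if (i : ℕ) = 0 then -(a ⟨1, by omega⟩) else 0)
      else if (j : ℕ) = 1 then (if (i : ℕ) = 1 then -(a ⟨1, by omega⟩) else 0)
      else -(a ⟨2 * (j : ℕ) - 2 + (i : ℕ), by have := j.isLt; have := i.isLt; omega⟩))
    0

/-! Write `M(a) = [[a₁·1, W], [U, 0]]`. The point is that `U * W = 0`. If `a₁ ≠ 0` this gives the
factorisation `M(a) = [1; a₁⁻¹ U] * [a₁·1, W]` through `ℂ^{p+1}`. If `a₁ = 0` then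
`rank M(a) ≤ rank W + rank U`, and Sylvester's inequality bounds that by `p + 1` because `U * W = 0`.
The dimension count holds because `a ↦ M(a)` is linear and every coordinate of `a` is, up to sign,
an entry of `M(a)`. -/

namespace Matrix

variable {K l m n o : Type*} [Field K] [Fintype m] [Fintype n] [Fintype o]

theorem rank_add_le (A B : Matrix l n K) : (A + B).rank ≤ A.rank + B.rank := by
  unfold rank
  rw [mulVecLin_add]
  exact (Submodule.finrank_mono (LinearMap.range_add_le _ _)).trans
    (Submodule.finrank_add_le_finrank_add_finrank _ _)

theorem rank_fromBlocks_zero_zero_le [DecidableEq m] [DecidableEq n] [DecidableEq o]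
    (B : Matrix m n K) (C : Matrix o m K) :
    (fromBlocks 0 B C 0).rank ≤ B.rank + C.rank := by
  have h : fromBlocks 0 B C 0 =
      fromRows (1 : Matrix m m K) 0 * B * fromCols (0 : Matrix n m K) 1 +
        fromRows (0 : Matrix m o K) 1 * C * fromCols (1 : Matrix m m K) 0 := by
    simp only [fromRows_mul, mul_fromCols, Matrix.one_mul, Matrix.zero_mul, Matrix.mul_one,
      Matrix.mul_zero]
    ext (i | i) (j | j) <;> simp
  rw [h]
  exact (rank_add_le _ _).trans <| add_le_add
    ((rank_mul_le_left _ _).trans (rank_mul_le_right _ _))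
    ((rank_mul_le_left _ _).trans (rank_mul_le_right _ _))

theorem rank_fromBlocks_smul_one_le_of_mul_eq_zero [DecidableEq m] [DecidableEq n]
    [DecidableEq o] (α : K) {B : Matrix m n K} {C : Matrix o m K} (hCB : C * B = 0) :
    (fromBlocks (α • 1) B C 0).rank ≤ Fintype.card m := by
  rcases eq_or_ne α 0 with rfl | hα
  · rw [zero_smul]
    exact (rank_fromBlocks_zero_zero_le B C).trans
      ((add_comm _ _).trans_le (rank_add_rank_le_card_of_mul_eq_zero hCB))
  · have h : fromBlocks (α • 1) B C 0 = fromRows 1 (α⁻¹ • C) * fromCols (α • 1) B := by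
      rw [fromRows_mul, Matrix.one_mul, mul_fromCols, Matrix.smul_mul, Matrix.mul_smul,
        Matrix.mul_one, smul_smul, inv_mul_cancel₀ hα, one_smul, Matrix.smul_mul, hCB, smul_zero,
        fromRows_fromCols_eq_fromBlocks]
    rw [h]
    exact (rank_mul_le_right _ _).trans (rank_le_card_height _)

end Matrix

theorem Mgen_toBlocks₂₁_mul_toBlocks₁₂ (p : ℕ) (hp : 2 ≤ p) (a : Fin (2 * p) → ℂ) :
    (Mgen p hp a).toBlocks₂₁ * (Mgen p hp a).toBlocks₁₂ = 0 := by
  ext i j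
  have hi := i.isLt
  have hj := j.isLt
  -- only `k = i` and `k = j + 2` contribute, namely `±(a 1 * a (2j + 2 + i))`
  rw [mul_apply, Finset.sum_eq_add_of_mem ⟨i, by omega⟩ ⟨j + 2, by omega⟩ (Finset.mem_univ _)
    (Finset.mem_univ _) (by simp [Fin.ext_iff]; omega)]
  · have hidx : 2 * ((j : ℕ) + 2) - 2 + i = 2 * j + 2 + i := by omega
    fin_cases i <;> simp [Mgen, toBlocks₂₁, toBlocks₁₂, hidx] <;> ring_nf
  · rintro ⟨k, hk⟩ - ⟨hki, hkj⟩
    simp only [ne_eq, Fin.ext_iff] at hki hkj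
    simp only [Mgen, toBlocks₂₁, toBlocks₁₂, fromBlocks_apply₁₂, fromBlocks_apply₂₁, of_apply]
    split_ifs <;> simp_all

theorem Mgen_rank_le (p : ℕ) (hp : 2 ≤ p) (a : Fin (2 * p) → ℂ) : (Mgen p hp a).rank ≤ p + 1 := by
  have h := Matrix.rank_fromBlocks_smul_one_le_of_mul_eq_zero (a ⟨0, by omega⟩)
    (Mgen_toBlocks₂₁_mul_toBlocks₁₂ p hp a)
  rwa [Fintype.card_fin] at h

noncomputable def mgenLinearMap (p : ℕ) (hp : 2 ≤ p) :
    (Fin (2 * p) → ℂ) →ₗ[ℂ] Matrix (Fin (p + 1) ⊕ Fin 2) (Fin (p + 1) ⊕ Fin (p - 1)) ℂ where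
  toFun := Mgen p hp
  map_add' a b := by
    ext (i | i) (j | j) <;> simp [Mgen, add_mul] <;> split_ifs <;> ring
  map_smul' c a := by
    ext (i | i) (j | j) <;> simp [Mgen, mul_ite, mul_assoc]

theorem Mgen_injective (p : ℕ) (hp : 2 ≤ p) : Function.Injective (Mgen p hp) := by
  intro a a' h
  funext ⟨k, hk⟩
  obtain rfl | rfl | hk2 : k = 0 ∨ k = 1 ∨ 2 ≤ k := by omega
  · simpa [Mgen] using congrFun₂ h (.inl 0) (.inl 0)
  · simpa [Mgen] using congrFun₂ h (.inr 0) (.inl 0)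
  · have hidx : 2 * (k / 2 + 1) - 2 + k % 2 = k := by omega
    have := congrFun₂ h (.inr ⟨k % 2, by omega⟩) (.inl ⟨k / 2 + 1, by omega⟩)
    simpa [Mgen, hidx, show k / 2 + 1 ≠ 0 by omega, show ¬k ≤ 1 by omega] using this

theorem finrank_span_range_Mgen (p : ℕ) (hp : 2 ≤ p) :
    Module.finrank ℂ (Submodule.span ℂ (Set.range (Mgen p hp))) = 2 * p := by
  have h : Set.range (Mgen p hp) = LinearMap.range (mgenLinearMap p hp) := by
    rw [LinearMap.coe_range]; rfl
  rw [h, Submodule.span_eq, LinearMap.finrank_range_of_inj (Mgen_injective p hp),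
    Module.finrank_fin_fun]

/-- Every member of the generalized family has rank at most `b − 2 = p + 1`, and
the family `{M(a) : a ∈ ℂ^{2p}}` spans a `2p = 2(b−3)`-dimensional space of
`b × (2b−6)` matrices: it is a `2(b−3)`-dimensional space of bounded rank `b−2`. -/
theorem stmt17 (p : ℕ) (hp : 2 ≤ p) :
    (∀ a : Fin (2 * p) → ℂ, (Mgen p hp a).rank ≤ p + 1) ∧
    Module.finrank ℂ (Submodule.span ℂ (Set.range (Mgen p hp))) = 2 * p :=
  ⟨Mgen_rank_le p hp, finrank_span_range_Mgen p hp⟩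
end

section
/- Let k ≥ 1. For all a1, a2 ∈ ℂ and every k×k complex matrix X, the 3k×3k block matrix [[a1·Id_k, 0, −X],[0, a1·Id_k, a2·Id_k],[a2·Id_k, X, 0]] has rank at most 2k. In particular, {this matrix : a1, a2 ∈ ℂ, X ∈ Matrix(k,k,ℂ)} is a (k²+2)-dimensional linear space of 3k×3k matrices of bounded rank 2k. -/
/-!
If `a1 ≠ 0`, the third block row is a combination of the first two:
`a1 · (a2, X, 0) = a2 · (a1, 0, -X) + X · (0, a1, a2)`, so the rank is at most the number `2k` of
rows in the first two block rows. If `a1 = 0`, the matrix is block anti-diagonal,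
`[[0, B], [C, 0]]` with `B` of width `k` and `C` of height `k`, so its rank is at most `k + k`.
The matrices depend linearly and injectively on `(a1, a2, X) ∈ ℂ × ℂ × ℂ^{k×k}`, hence span a
space of dimension `k² + 2`.
-/

open Matrix

/-- The `3k × 3k` block matrix `[[a1·Id, 0, −X], [0, a1·Id, a2·Id], [a2·Id, X, 0]]`. -/
noncomputable def blowupMat (k : ℕ) (a1 a2 : ℂ) (X : Matrix (Fin k) (Fin k) ℂ) :
    Matrix ((Fin k ⊕ Fin k) ⊕ Fin k) ((Fin k ⊕ Fin k) ⊕ Fin k) ℂ :=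
  Matrix.fromBlocks
    (Matrix.fromBlocks (a1 • (1 : Matrix (Fin k) (Fin k) ℂ)) 0 0
      (a1 • (1 : Matrix (Fin k) (Fin k) ℂ)))
    (Matrix.fromRows (-X) (a2 • (1 : Matrix (Fin k) (Fin k) ℂ)))
    (Matrix.fromCols (a2 • (1 : Matrix (Fin k) (Fin k) ℂ)) X)
    0

namespace Matrix

variable {R m₁ m₂ n n₁ n₂ : Type*} [CommSemiring R] [StrongRankCondition R]

theorem rank_le_card_of_toRows₂_eq_mul [Fintype m₁] [Fintype n] [DecidableEq m₁]
    (M : Matrix (m₁ ⊕ m₂) n R) (L : Matrix m₂ m₁ R) (h : M.toRows₂ = L * M.toRows₁) :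
    M.rank ≤ Fintype.card m₁ :=
  calc M.rank = (fromRows 1 L * M.toRows₁).rank := by
        rw [fromRows_mul, Matrix.one_mul, ← h, fromRows_toRows]
    _ ≤ M.toRows₁.rank := rank_mul_le_right _ _
    _ ≤ Fintype.card m₁ := rank_le_card_height _

theorem rank_fromBlocks_zero_zero_le_s18 [Fintype n₁] [Fintype n₂] [Fintype m₂] [DecidableEq n₂]
    [DecidableEq m₂] (B : Matrix m₁ n₂ R) (C : Matrix m₂ n₁ R) :
    (fromBlocks 0 B C 0).rank ≤ Fintype.card n₂ + Fintype.card m₂ := by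
  have hfactor : fromBlocks 0 B C 0 =
      fromBlocks B 0 0 (1 : Matrix m₂ m₂ R) * fromBlocks (0 : Matrix n₂ n₁ R) 1 C 0 := by
    rw [fromBlocks_multiply]
    simp
  rw [hfactor, ← Fintype.card_sum]
  exact (rank_mul_le_left _ _).trans (rank_le_card_width _)

end Matrix

variable {k : ℕ}

local notation "I" => (1 : Matrix (Fin k) (Fin k) ℂ)

theorem blowupMat_toRows₂_eq_mul {a1 : ℂ} (ha1 : a1 ≠ 0) (a2 : ℂ)
    (X : Matrix (Fin k) (Fin k) ℂ) :
    (blowupMat k a1 a2 X).toRows₂ =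
      fromCols ((a2 / a1) • I) (a1⁻¹ • X) * (blowupMat k a1 a2 X).toRows₁ := by
  rw [blowupMat, ← fromRows_fromCols_eq_fromBlocks, toRows₁_fromRows, toRows₂_fromRows,
    Matrix.mul_fromCols, Matrix.fromCols_mul_fromBlocks, Matrix.fromCols_mul_fromRows]
  simp [smul_smul, ha1, div_eq_mul_inv, mul_comm a2]

theorem blowupMat_rank_le (a1 a2 : ℂ) (X : Matrix (Fin k) (Fin k) ℂ) :
    (blowupMat k a1 a2 X).rank ≤ 2 * k := by
  rcases eq_or_ne a1 0 with rfl | ha1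
  · rw [blowupMat, zero_smul, fromBlocks_zero]
    simpa [two_mul] using
      rank_fromBlocks_zero_zero_le_s18 (fromRows (-X) (a2 • I)) (fromCols (a2 • I) X)
  · simpa [two_mul] using
      rank_le_card_of_toRows₂_eq_mul _ _ (blowupMat_toRows₂_eq_mul ha1 a2 X)

variable (k) in
noncomputable def blowupLinearMap :
    (ℂ × ℂ × Matrix (Fin k) (Fin k) ℂ) →ₗ[ℂ]
      Matrix ((Fin k ⊕ Fin k) ⊕ Fin k) ((Fin k ⊕ Fin k) ⊕ Fin k) ℂ where
  toFun p := blowupMat k p.1 p.2.1 p.2.2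
  map_add' p q := by
    ext ((i | i) | i) ((j | j) | j) <;> simp [blowupMat, add_smul, add_comm]
  map_smul' c p := by
    ext ((i | i) | i) ((j | j) | j) <;> simp [blowupMat, mul_assoc]

theorem blowupLinearMap_injective [NeZero k] : Function.Injective (blowupLinearMap k) := by
  rw [injective_iff_map_eq_zero]
  rintro ⟨a1, a2, X⟩ h
  change blowupMat k a1 a2 X = 0 at h
  have ha1 : a1 = 0 := by simpa [blowupMat] using congrFun₂ h (.inl (.inl 0)) (.inl (.inl 0))
  have ha2 : a2 = 0 := by simpa [blowupMat] using congrFun₂ h (.inr 0) (.inl (.inl 0))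
  have hX : X = 0 := by
    ext i j
    simpa [blowupMat] using congrFun₂ h (.inr i) (.inl (.inr j))
  simp [ha1, ha2, hX]

/-- For every `a1, a2 ∈ ℂ` and every `k×k` matrix `X`, the `3k×3k` block matrix
`[[a1·Id, 0, −X], [0, a1·Id, a2·Id], [a2·Id, X, 0]]` has rank at most `2k`; in
particular these matrices form a `(k²+2)`-dimensional linear space of `3k×3k`
matrices of bounded rank `2k`. -/
theorem stmt18 (k : ℕ) (hk : 1 ≤ k) :
    (∀ (a1 a2 : ℂ) (X : Matrix (Fin k) (Fin k) ℂ), (blowupMat k a1 a2 X).rank ≤ 2 * k) ∧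
    Module.finrank ℂ
      (Submodule.span ℂ {M | ∃ (a1 a2 : ℂ) (X : Matrix (Fin k) (Fin k) ℂ),
        M = blowupMat k a1 a2 X}) = k ^ 2 + 2 := by
  refine ⟨blowupMat_rank_le, ?_⟩
  have : NeZero k := ⟨by omega⟩
  have hrange : {M | ∃ (a1 a2 : ℂ) (X : Matrix (Fin k) (Fin k) ℂ), M = blowupMat k a1 a2 X} =
      LinearMap.range (blowupLinearMap k) := by
    ext M
    simp [blowupLinearMap, eq_comm]
  rw [hrange, Submodule.span_eq, LinearMap.finrank_range_of_inj blowupLinearMap_injective,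
    Module.finrank_prod, Module.finrank_prod, Module.finrank_matrix]
  simp only [Fintype.card_fin, Module.finrank_self]
  ring
end
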